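/- arXiv:2303.17327 — 4 statements merged into one kernel-verified Lean document; each statement's English description precedes it below -/
import Mathlib

section
/- If {S_i : i ∈ I} is a pairwise disjoint family of subsets of 2^ω, each S_i is an (s⁰)-set, and the family is (s)-additive (i.e., for every J ⊆ I the union ⋃_{i∈J} S_i is an (s)-set), then ⋃_{i∈I} S_i is an (s⁰)-set. -/
open Set

/-- A perfect (Sacks) tree: nonempty, downward closed, and every node has a splitting extension. -/
def IsPerfectTree (T : Set (List Bool)) : Prop :=
  T.Nonempty ∧ (∀ t ∈ T, ∀ n, t.take n ∈ T) ∧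
    ∀ t ∈ T, ∃ s ∈ T, t <+: s ∧ s ++ [false] ∈ T ∧ s ++ [true] ∈ T

/-- The set of infinite branches of a tree. -/
def branches (T : Set (List Bool)) : Set (ℕ → Bool) :=
  {x | ∀ n, (List.ofFn fun i : Fin n => x i) ∈ T}

/-- `A` is an (s)-set. -/
def MarczewskiS (A : Set (ℕ → Bool)) : Prop :=
  ∀ T, IsPerfectTree T → ∃ Q, IsPerfectTree Q ∧ Q ⊆ T ∧
    (branches Q ⊆ A ∨ branches Q ∩ A = ∅)

/-- `A` is an (s⁰)-set. -/
def S0Set (A : Set (ℕ → Bool)) : Prop :=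
  ∀ T, IsPerfectTree T → ∃ Q, IsPerfectTree Q ∧ Q ⊆ T ∧ branches Q ∩ A = ∅

/-!
Suppose the branches of a perfect tree `Q` are covered by `⋃ i, S i`, and call `i` a color of a
perfect `R ⊆ Q` when `S i` meets `[R]`. By (s)-additivity for `J = I` it is enough to show that
this is impossible.

If some perfect `P ⊆ Q` has no two perfect subtrees with disjoint sets of colors, code each color
`i` by a point `W i ∈ S i`. Applying (s) to `{i | W i n = true}` yields a bit `g n` such that every
perfect subtree of `P` shrinks to one all of whose colors have `W i n = g n`; a fusion over all `n`
gives a perfect subtree all of whose colors have code `g`. It has a single color `i`, against `S i`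
being (s⁰).

Otherwise a fusion gives a perfect `P ⊆ Q` containing at most one branch in each `S i`. For a
Bernstein set `X`, the union of the `S i` over the colors of `X ∩ [P]` then agrees with `X` on
`[P]`, so it is not an (s)-set.
-/

open Cardinal

def initSeg (x : ℕ → Bool) (n : ℕ) : List Bool := List.ofFn fun i : Fin n => x i

@[simp] theorem length_initSeg (x : ℕ → Bool) (n : ℕ) : (initSeg x n).length = n := by
  simp [initSeg]

@[simp] theorem getElem_initSeg (x : ℕ → Bool) (n i : ℕ) (h : i < (initSeg x n).length) :
    (initSeg x n)[i] = x i := by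
  simp [initSeg]

theorem initSeg_succ (x : ℕ → Bool) (n : ℕ) : initSeg x (n + 1) = initSeg x n ++ [x n] := by
  rw [initSeg, List.ofFn_succ_last]; rfl

theorem take_initSeg (x : ℕ → Bool) {m n : ℕ} (h : m ≤ n) : (initSeg x n).take m = initSeg x m :=
  List.ext_getElem (by simp [h]) fun i _ _ => by simp

theorem initSeg_prefix_initSeg (x : ℕ → Bool) {m n : ℕ} (h : m ≤ n) :
    initSeg x m <+: initSeg x n :=
  take_initSeg x h ▸ List.take_prefix _ _

theorem initSeg_congr {x y : ℕ → Bool} {n : ℕ} (h : ∀ i < n, x i = y i) :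
    initSeg x n = initSeg y n :=
  List.ext_getElem (by simp) fun i hi _ => by simpa using h i (by simpa using hi)

theorem eq_of_forall_initSeg_eq {x y : ℕ → Bool} {g : ℕ → ℕ} (hg : ∀ n, n < g n)
    (h : ∀ n, initSeg x (g n) = initSeg y (g n)) : x = y := by
  funext n
  have := List.getElem_of_eq (h n) (by simpa using hg n)
  simpa using this

theorem mem_branches_iff {T : Set (List Bool)} {x : ℕ → Bool} :
    x ∈ branches T ↔ ∀ n, initSeg x n ∈ T :=
  Iff.rfl

theorem branches_mono {R T : Set (List Bool)} (h : R ⊆ T) : branches R ⊆ branches T :=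
  fun _ hx n => h (hx n)

theorem exists_initSeg_eq_of_chain {g : ℕ → List Bool} (hg : ∀ n, g n <+: g (n + 1))
    (hlen : ∀ n, n < (g (n + 1)).length) : ∃ x, ∀ n, initSeg x (g n).length = g n := by
  have chain {m n : ℕ} (h : m ≤ n) : g m <+: g n :=
    Nat.rel_of_forall_rel_succ_of_le (· <+: ·) hg h
  refine ⟨fun n => (g (n + 1))[n]'(hlen n),
    fun n => List.ext_getElem (by simp) fun i hi hi' => ?_⟩
  simp only [getElem_initSeg]
  rcases le_total (i + 1) n with h | h
  · exact (chain h).getElem _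
  · exact ((chain h).getElem hi').symm

namespace IsPerfectTree

variable {T : Set (List Bool)}

theorem mem_of_prefix (hT : IsPerfectTree T) {t u : List Bool} (ht : t ∈ T) (h : u <+: t) :
    u ∈ T :=
  List.prefix_iff_eq_take.mp h ▸ hT.2.1 t ht _

theorem nil_mem (hT : IsPerfectTree T) : [] ∈ T :=
  hT.1.elim fun _ ht => hT.mem_of_prefix ht List.nil_prefix

theorem exists_mem_branches_of_chain (hT : IsPerfectTree T) {g : ℕ → List Bool}
    (hg : ∀ n, g n <+: g (n + 1)) (hlen : ∀ n, n < (g (n + 1)).length) (hmem : ∀ n, g n ∈ T) :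
    ∃ x ∈ branches T, ∀ n, initSeg x (g n).length = g n := by
  obtain ⟨x, hx⟩ := exists_initSeg_eq_of_chain hg hlen
  refine ⟨x, fun n => hT.mem_of_prefix (hmem (n + 1)) ?_, hx⟩
  rw [← hx (n + 1)]
  exact initSeg_prefix_initSeg x (hlen n).le

/-- A splitting node above `t`, followed by the bit `b`. -/
noncomputable def next (hT : IsPerfectTree T) (t : T) (b : Bool) : T :=
  ⟨(hT.2.2 t t.2).choose ++ [b], by
    obtain ⟨-, -, h₀, h₁⟩ := (hT.2.2 t t.2).choose_spec
    cases b <;> assumption⟩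

theorem prefix_next (hT : IsPerfectTree T) (t : T) (b : Bool) :
    (t : List Bool) <+: hT.next t b :=
  (hT.2.2 t t.2).choose_spec.2.1.trans (List.prefix_append _ _)

noncomputable def path (hT : IsPerfectTree T) (x : ℕ → Bool) : ℕ → T
  | 0 => ⟨[], hT.nil_mem⟩
  | n + 1 => hT.next (hT.path x n) (x n)

theorem path_congr (hT : IsPerfectTree T) {x y : ℕ → Bool} {n : ℕ} (h : ∀ i < n, x i = y i) :
    hT.path x n = hT.path y n := by
  induction n with
  | zero => rfl
  | succ n ih =>
    simp only [path, h n n.lt_succ_self, ih fun i hi => h i (Nat.lt_succ_of_lt hi)]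

theorem length_path (hT : IsPerfectTree T) (x : ℕ → Bool) (n : ℕ) :
    n ≤ (hT.path x n : List Bool).length := by
  induction n with
  | zero => simp
  | succ n ih =>
    have := (hT.2.2 _ (hT.path x n).2).choose_spec.2.1.length_le
    simp only [path, next, List.length_append, List.length_singleton]
    omega

theorem card_branches (hT : IsPerfectTree T) : #(ℕ → Bool) ≤ #(branches T) := by
  have hbranch (x : ℕ → Bool) := hT.exists_mem_branches_of_chain (g := fun n => hT.path x n)
    (fun n => hT.prefix_next _ _) (fun n => hT.length_path x (n + 1)) (fun n => (hT.path x n).2)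
  choose f hf hfpath using hbranch
  refine mk_le_of_injective (f := fun x => (⟨f x, hf x⟩ : branches T)) fun x y hxy => ?_
  by_contra hne
  have hdiff : ∃ k, x k ≠ y k := by simpa [funext_iff] using hne
  set k := Nat.find hdiff
  have hbelow : hT.path x k = hT.path y k :=
    hT.path_congr fun i hi => not_not.mp (Nat.find_min hdiff hi)
  have hxk : (hT.path x (k + 1) : List Bool) = (hT.2.2 _ (hT.path x k).2).choose ++ [x k] := rfl
  have hyk : (hT.path y (k + 1) : List Bool) = (hT.2.2 _ (hT.path x k).2).choose ++ [y k] := by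
    simp only [path, hbelow]; rfl
  have heq : (hT.path x (k + 1) : List Bool) = hT.path y (k + 1) := by
    rw [← hfpath x, ← hfpath y, show f x = f y from congrArg Subtype.val hxy, hxk, hyk]
    simp
  rw [hxk, hyk] at heq
  exact Nat.find_spec hdiff (by simpa using heq)

theorem branches_nontrivial (hT : IsPerfectTree T) : (branches T).Nontrivial := by
  rw [← nontrivial_coe_sort, ← one_lt_iff_nontrivial]
  exact (nat_lt_continuum 1).trans_le (by simpa using hT.card_branches)

theorem branches_nonempty (hT : IsPerfectTree T) : (branches T).Nonempty :=
  hT.branches_nontrivial.nonempty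

end IsPerfectTree

/-- `T ∩ cone t` is the subtree of `T` through `t`. -/
def cone (t : List Bool) : Set (List Bool) := {u | u <+: t ∨ t <+: u}

theorem mem_cone_comm {t u : List Bool} : u ∈ cone t ↔ t ∈ cone u :=
  Or.comm

theorem prefix_of_mem_cone_of_length_le {t u : List Bool} (hu : u ∈ cone t)
    (h : t.length ≤ u.length) : t <+: u :=
  hu.elim (fun hut => hut.eq_of_length (le_antisymm hut.length_le h) ▸ List.prefix_rfl) id

theorem prefix_of_forall_mem_cone_append {p u : List Bool} (h : ∀ b, u ∈ cone (p ++ [b])) :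
    u <+: p := by
  by_cases hlen : u.length ≤ p.length
  · rcases h false with hu | hu
    · exact (List.prefix_concat_iff.mp hu).resolve_left fun e => by simp [e] at hlen
    · have := hu.length_le
      simp at this
      omega
  · have hpre (b : Bool) : p ++ [b] <+: u :=
      prefix_of_mem_cone_of_length_le (h b) (by simp; omega)
    have := List.prefix_of_prefix_length_le (hpre false) (hpre true) (by simp)
    simp at this

namespace IsPerfectTree

variable {T : Set (List Bool)}

theorem inter_cone (hT : IsPerfectTree T) {t : List Bool} (ht : t ∈ T) :
    IsPerfectTree (T ∩ cone t) := by
  refine ⟨⟨t, ht, Or.inl List.prefix_rfl⟩, fun u ⟨hu, hut⟩ n => ⟨hT.2.1 u hu n, ?_⟩, ?_⟩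
  · rcases le_total n t.length with h | h
    · left
      rcases hut with hut | hut
      · exact (List.take_prefix n u).trans hut
      · rw [List.prefix_iff_eq_take.mp hut]
        exact List.prefix_take_iff.mpr
          ⟨List.take_prefix _ _, (List.length_take_le _ _).trans h⟩
    · rcases hut with hut | hut
      · exact Or.inl ((List.take_prefix n u).trans hut)
      · exact Or.inr (List.prefix_take_iff.mpr ⟨hut, h⟩)
  · rintro u ⟨hu, hut⟩
    obtain ⟨w, hw, huw, htw⟩ : ∃ w ∈ T, u <+: w ∧ t <+: w :=
      hut.elim (fun h => ⟨t, ht, h, List.prefix_rfl⟩) fun h => ⟨u, hu, List.prefix_rfl, h⟩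
    obtain ⟨s, hs, hws, hs₀, hs₁⟩ := hT.2.2 w hw
    have hts : t <+: s := htw.trans hws
    exact ⟨s, ⟨hs, Or.inr hts⟩, huw.trans hws,
      ⟨hs₀, Or.inr (hts.trans (List.prefix_append _ _))⟩,
      ⟨hs₁, Or.inr (hts.trans (List.prefix_append _ _))⟩⟩

theorem mem_of_subset_cone (hT : IsPerfectTree T) {t : List Bool} (h : T ⊆ cone t) :
    t ∈ T := by
  obtain ⟨x, hx⟩ := hT.branches_nonempty
  have := prefix_of_mem_cone_of_length_le (h (hx t.length)) (by simp)
  exact this.eq_of_length (by simp) ▸ hx t.length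

end IsPerfectTree

def IsSplitting (R : Set (List Bool)) (p : List Bool) (R' : Bool → Set (List Bool)) : Prop :=
  ∀ b, IsPerfectTree (R' b) ∧ R' b ⊆ R ∩ cone (p ++ [b])

theorem IsSplitting.mono {R : Set (List Bool)} {p : List Bool} {R' R'' : Bool → Set (List Bool)}
    (h : IsSplitting R p R')
    (h' : ∀ b, IsPerfectTree (R'' b) ∧ R'' b ⊆ R' b) : IsSplitting R p R'' :=
  fun b => ⟨(h' b).1, (h' b).2.trans (h b).2⟩

theorem IsPerfectTree.exists_isSplitting {R : Set (List Bool)} (hR : IsPerfectTree R) :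
    ∃ p, IsSplitting R p fun b => R ∩ cone (p ++ [b]) := by
  obtain ⟨p, -, -, h₀, h₁⟩ := hR.2.2 [] hR.nil_mem
  exact ⟨p, fun b => ⟨hR.inter_cone (by cases b <;> assumption), subset_rfl⟩⟩

theorem exists_isSplitting_of_subset {R R₀ R₁ : Set (List Bool)} (hR₀ : IsPerfectTree R₀)
    (hR₁ : IsPerfectTree R₁) (h₀ : R₀ ⊆ R) (h₁ : R₁ ⊆ R) :
    ∃ p R' c, IsSplitting R p R' ∧ R' c ⊆ R₀ ∧ R' (!c) ⊆ R₁ := by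
  obtain ⟨x, hx⟩ := hR₀.branches_nonempty
  obtain ⟨y, hy, hyx⟩ := hR₁.branches_nontrivial.exists_ne x
  have hdiff : ∃ m, x m ≠ y m := by simpa [funext_iff, eq_comm] using hyx
  set m := Nat.find hdiff
  have hp : initSeg y m = initSeg x m :=
    initSeg_congr fun i hi => (not_not.mp (Nat.find_min hdiff hi)).symm
  have hym : y m = !x m := by
    have hne : x m ≠ y m := Nat.find_spec hdiff
    revert hne; cases x m <;> cases y m <;> simp
  refine ⟨initSeg x m, fun b => (if b = x m then R₀ else R₁) ∩ cone (initSeg x m ++ [b]),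
    x m, fun b => ⟨?_, ?_⟩, by simp, by simp⟩
  · dsimp only
    by_cases hb : b = x m
    · rw [if_pos hb, hb, ← initSeg_succ]
      exact hR₀.inter_cone (mem_branches_iff.mp hx _)
    · have hb' : b = y m := by rw [hym]; revert hb; cases b <;> cases x m <;> simp
      rw [if_neg hb, hb', ← hp, ← initSeg_succ]
      exact hR₁.inter_cone (mem_branches_iff.mp hy _)
  · dsimp only
    split_ifs
    exacts [inter_subset_inter_left _ h₀, inter_subset_inter_left _ h₁]

structure FusionNode (T : Set (List Bool)) where
  stem : List Bool
  tree : Set (List Bool)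
  perfect : IsPerfectTree tree
  subset : tree ⊆ T ∩ cone stem

namespace FusionNode

variable {T : Set (List Bool)} {Ψ : ℕ → (Bool → Set (List Bool)) → Prop}
  (h : ∀ R, IsPerfectTree R → R ⊆ T → ∀ n, ∃ p R', IsSplitting R p R' ∧ Ψ n R')

theorem stem_mem (N : FusionNode T) : N.stem ∈ N.tree :=
  N.perfect.mem_of_subset_cone (N.subset.trans inter_subset_right)

def root (hT : IsPerfectTree T) : FusionNode T :=
  ⟨[], T, hT, fun _ hu => ⟨hu, Or.inr List.nil_prefix⟩⟩

noncomputable def splitNode (N : FusionNode T) (n : ℕ) : List Bool :=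
  (h N.tree N.perfect (N.subset.trans inter_subset_left) n).choose

noncomputable def splitTrees (N : FusionNode T) (n : ℕ) : Bool → Set (List Bool) :=
  (h N.tree N.perfect (N.subset.trans inter_subset_left) n).choose_spec.choose

theorem isSplitting_splitTrees (N : FusionNode T) (n : ℕ) :
    IsSplitting N.tree (N.splitNode h n) (N.splitTrees h n) ∧ Ψ n (N.splitTrees h n) :=
  (h N.tree N.perfect (N.subset.trans inter_subset_left) n).choose_spec.choose_spec

noncomputable def child (N : FusionNode T) (n : ℕ) (b : Bool) : FusionNode T where
  stem := N.splitNode h n ++ [b]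
  tree := N.splitTrees h n b
  perfect := ((N.isSplitting_splitTrees h n).1 b).1
  subset := ((N.isSplitting_splitTrees h n).1 b).2.trans
    (inter_subset_inter_left _ (N.subset.trans inter_subset_left))

theorem stem_prefix_splitNode (N : FusionNode T) (n : ℕ) : N.stem <+: N.splitNode h n :=
  prefix_of_forall_mem_cone_append fun b =>
    mem_cone_comm.mp
      (N.subset (((N.isSplitting_splitTrees h n).1 b).2 (N.child h n b).stem_mem).1).2

end FusionNode

section Fusion

variable {T : Set (List Bool)} {Ψ : ℕ → (Bool → Set (List Bool)) → Prop}
  (hT : IsPerfectTree T)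
  (h : ∀ R, IsPerfectTree R → R ⊆ T → ∀ n, ∃ p R', IsSplitting R p R' ∧ Ψ n R')

/-- The most recent choice is the head of `σ`. -/
noncomputable def fusionNode : List Bool → FusionNode T
  | [] => FusionNode.root hT
  | b :: σ => (fusionNode σ).child h σ.length b

theorem stem_cons (b : Bool) (σ : List Bool) :
    (fusionNode hT h (b :: σ)).stem = (fusionNode hT h σ).splitNode h σ.length ++ [b] :=
  rfl

theorem stem_prefix_stem_cons (b : Bool) (σ : List Bool) :
    (fusionNode hT h σ).stem <+: (fusionNode hT h (b :: σ)).stem :=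
  (FusionNode.stem_prefix_splitNode h _ _).trans (List.prefix_append _ _)

theorem length_stem_lt_length_stem_cons (b : Bool) (σ : List Bool) :
    (fusionNode hT h σ).stem.length < (fusionNode hT h (b :: σ)).stem.length := by
  have := (FusionNode.stem_prefix_splitNode h (fusionNode hT h σ) σ.length).length_le
  rw [stem_cons]
  simp
  omega

theorem stem_prefix_stem_append (l σ : List Bool) :
    (fusionNode hT h σ).stem <+: (fusionNode hT h (l ++ σ)).stem := by
  induction l with
  | nil => exact List.prefix_rfl
  | cons b l ih => exact ih.trans (stem_prefix_stem_cons hT h b _)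

theorem tree_cons_subset (b : Bool) (σ : List Bool) :
    (fusionNode hT h (b :: σ)).tree ⊆ (fusionNode hT h σ).tree :=
  (((fusionNode hT h σ).isSplitting_splitTrees h _).1 b).2.trans inter_subset_left

theorem suffix_of_stem_prefix_stem {σ τ : List Bool} :
    (fusionNode hT h σ).stem <+: (fusionNode hT h τ).stem → σ <:+ τ := by
  induction σ with
  | nil => exact fun _ => List.nil_suffix
  | cons c σ ih =>
    intro hστ
    obtain ⟨l, rfl⟩ := ih ((stem_prefix_stem_cons hT h c σ).trans hστ)
    rcases List.eq_nil_or_concat' l with rfl | ⟨l, d, rfl⟩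
    · exact absurd hστ.length_le (not_le.mpr (length_stem_lt_length_stem_cons hT h c σ))
    · rw [List.append_assoc, List.singleton_append] at hστ ⊢
      have hcd := List.prefix_of_prefix_length_le hστ (stem_prefix_stem_append hT h l (d :: σ))
        (by simp [stem_cons])
      rw [stem_cons, stem_cons] at hcd
      obtain rfl : c = d := by simpa using hcd
      exact List.suffix_append _ _

theorem exists_stem_cons_prefix {σ τ : List Bool}
    (hστ : (fusionNode hT h σ).stem <+: (fusionNode hT h τ).stem)
    (hlt : (fusionNode hT h σ).stem.length < (fusionNode hT h τ).stem.length) :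
    ∃ b, (fusionNode hT h (b :: σ)).stem <+: (fusionNode hT h τ).stem := by
  obtain ⟨l, rfl⟩ := suffix_of_stem_prefix_stem hT h hστ
  rcases List.eq_nil_or_concat' l with rfl | ⟨l, b, rfl⟩
  · simp at hlt
  · exact ⟨b, by simpa using stem_prefix_stem_append hT h l (b :: σ)⟩

def fusionTree : Set (List Bool) := {u | ∃ σ, u <+: (fusionNode hT h σ).stem}

theorem fusionTree_subset : fusionTree hT h ⊆ T := fun _ ⟨σ, hu⟩ =>
  ((fusionNode hT h σ).subset ((fusionNode hT h σ).perfect.mem_of_prefix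
    (fusionNode hT h σ).stem_mem hu)).1

theorem isPerfectTree_fusionTree : IsPerfectTree (fusionTree hT h) := by
  refine ⟨⟨[], [], List.nil_prefix⟩,
    fun u ⟨σ, hu⟩ n => ⟨σ, (List.take_prefix n u).trans hu⟩, ?_⟩
  rintro u ⟨σ, hu⟩
  refine ⟨(fusionNode hT h σ).splitNode h σ.length, ⟨false :: σ, List.prefix_append _ _⟩,
    hu.trans (FusionNode.stem_prefix_splitNode h _ _), ⟨false :: σ, ?_⟩, ⟨true :: σ, ?_⟩⟩ <;>
  exact List.prefix_rfl

/-- The indices of the fusion nodes through which `x` passes. -/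
noncomputable def fusionPath (x : ℕ → Bool) : ℕ → List Bool
  | 0 => []
  | n + 1 =>
    x ((fusionNode hT h (fusionPath x n)).splitNode h n).length :: fusionPath x n

theorem length_fusionPath (x : ℕ → Bool) (n : ℕ) : (fusionPath hT h x n).length = n := by
  induction n with
  | zero => rfl
  | succ n ih => simp [fusionPath, ih]

theorem length_le_length_stem (σ : List Bool) :
    σ.length ≤ (fusionNode hT h σ).stem.length := by
  induction σ with
  | nil => simp
  | cons b σ ih =>
    have := length_stem_lt_length_stem_cons hT h b σ
    simp only [List.length_cons]
    omega

variable {hT h}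

theorem initSeg_stem_cons {x : ℕ → Bool} (hx : x ∈ branches (fusionTree hT h)) {σ : List Bool}
    (hσ : initSeg x (fusionNode hT h σ).stem.length = (fusionNode hT h σ).stem) :
    ∀ b, b = x ((fusionNode hT h σ).splitNode h σ.length).length →
      initSeg x (fusionNode hT h (b :: σ)).stem.length = (fusionNode hT h (b :: σ)).stem := by
  have hσp := (FusionNode.stem_prefix_splitNode h (fusionNode hT h σ) σ.length).length_le
  have hcons (b : Bool) := stem_cons hT h b σ
  have hex (τ : List Bool)
      (hlt : (fusionNode hT h σ).stem.length < (fusionNode hT h τ).stem.length)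
      (hστ : (fusionNode hT h σ).stem <+: (fusionNode hT h τ).stem) :=
    exists_stem_cons_prefix hT h hστ hlt
  generalize (fusionNode hT h σ).splitNode h σ.length = p at hσp hcons ⊢
  rintro _ rfl
  obtain ⟨τ, hτ⟩ := mem_branches_iff.mp hx (p.length + 1)
  have hτlen := hτ.length_le
  simp only [length_initSeg] at hτlen
  obtain ⟨b, hb⟩ := hex τ (by omega) (hσ ▸ (initSeg_prefix_initSeg x (by omega)).trans hτ)
  have hxb : initSeg x (p.length + 1) = p ++ [b] := by
    rw [hcons] at hb
    exact (List.prefix_of_prefix_length_le hτ hb (by simp)).eq_of_length (by simp)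
  have hxp : x p.length = b := by simpa using List.getElem_of_eq hxb (i := p.length) (by simp)
  simpa [hcons, hxp] using hxb

theorem initSeg_stem_fusionPath {x : ℕ → Bool} (hx : x ∈ branches (fusionTree hT h)) (n : ℕ) :
    initSeg x (fusionNode hT h (fusionPath hT h x n)).stem.length =
      (fusionNode hT h (fusionPath hT h x n)).stem := by
  induction n with
  | zero => simp [fusionPath, fusionNode, FusionNode.root, initSeg]
  | succ n ih =>
    have := initSeg_stem_cons hx ih _ rfl
    rwa [length_fusionPath] at this

theorem mem_branches_tree_fusionPath {x : ℕ → Bool} (hx : x ∈ branches (fusionTree hT h))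
    (n : ℕ) : x ∈ branches (fusionNode hT h (fusionPath hT h x n)).tree := by
  intro k
  set N := max k n
  have hanti : Antitone fun m => (fusionNode hT h (fusionPath hT h x m)).tree :=
    antitone_nat_of_succ_le fun m => tree_cons_subset hT h _ _
  have hlen := length_le_length_stem hT h (fusionPath hT h x N)
  rw [length_fusionPath] at hlen
  refine hanti (le_max_right k n) ((fusionNode hT h _).perfect.mem_of_prefix
    (fusionNode hT h _).stem_mem ?_)
  rw [← initSeg_stem_fusionPath hx N]
  exact initSeg_prefix_initSeg x ((le_max_left k n).trans hlen)

theorem mem_branches_splitTrees_fusionPath {x : ℕ → Bool} (hx : x ∈ branches (fusionTree hT h))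
    (n : ℕ) :
    x ∈ branches ((fusionNode hT h (fusionPath hT h x n)).splitTrees h n
      (x ((fusionNode hT h (fusionPath hT h x n)).splitNode h n).length)) := by
  have := mem_branches_tree_fusionPath hx (n + 1)
  simp only [fusionPath, fusionNode, FusionNode.child, length_fusionPath] at this
  exact this

theorem exists_fusionPath_eq_and_ne {x y : ℕ → Bool} (hx : x ∈ branches (fusionTree hT h))
    (hy : y ∈ branches (fusionTree hT h)) (hxy : x ≠ y) :
    ∃ n, fusionPath hT h x n = fusionPath hT h y n ∧
      y ((fusionNode hT h (fusionPath hT h x n)).splitNode h n).length =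
        !x ((fusionNode hT h (fusionPath hT h x n)).splitNode h n).length := by
  simp only [Bool.eq_not, ne_eq]
  by_contra! hsame
  have hpath (n : ℕ) : fusionPath hT h x n = fusionPath hT h y n := by
    induction n with
    | zero => rfl
    | succ n ih => rw [fusionPath, fusionPath, ← ih, hsame n ih]
  refine hxy (eq_of_forall_initSeg_eq (g := fun n =>
    (fusionNode hT h (fusionPath hT h x (n + 1))).stem.length) (fun n => ?_) fun n => ?_)
  · have := length_le_length_stem hT h (fusionPath hT h x (n + 1))
    rw [length_fusionPath] at this
    omega
  · rw [initSeg_stem_fusionPath hx, hpath, initSeg_stem_fusionPath hy]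

end Fusion

theorem IsPerfectTree.exists_fusion {T : Set (List Bool)}
    {Ψ : ℕ → (Bool → Set (List Bool)) → Prop} (hT : IsPerfectTree T)
    (h : ∀ R, IsPerfectTree R → R ⊆ T → ∀ n, ∃ p R', IsSplitting R p R' ∧ Ψ n R') :
    ∃ P, IsPerfectTree P ∧ P ⊆ T ∧
      (∀ x ∈ branches P, ∀ n, ∃ R', Ψ n R' ∧ ∃ b, x ∈ branches (R' b)) ∧
      ∀ x ∈ branches P, ∀ y ∈ branches P, x ≠ y →
        ∃ n R', Ψ n R' ∧ ∃ b, x ∈ branches (R' b) ∧ y ∈ branches (R' !b) := by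
  refine ⟨fusionTree hT h, isPerfectTree_fusionTree hT h, fusionTree_subset hT h,
    fun x hx n => ⟨_, (FusionNode.isSplitting_splitTrees h _ n).2, _,
      mem_branches_splitTrees_fusionPath hx n⟩, fun x hx y hy hxy => ?_⟩
  obtain ⟨n, hpath, hne⟩ := exists_fusionPath_eq_and_ne hx hy hxy
  have hyx := mem_branches_splitTrees_fusionPath hy n
  rw [← hpath, hne] at hyx
  exact ⟨n, _, (FusionNode.isSplitting_splitTrees h _ n).2, _,
    mem_branches_splitTrees_fusionPath hx n, hyx⟩

theorem IsPerfectTree.exists_subtree_inter_iUnion_eq_empty {T : Set (List Bool)}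
    (hT : IsPerfectTree T) (A : ℕ → Set (ℕ → Bool))
    (h : ∀ n R, IsPerfectTree R → R ⊆ T →
      ∃ R', IsPerfectTree R' ∧ R' ⊆ R ∧ branches R' ∩ A n = ∅) :
    ∃ P, IsPerfectTree P ∧ P ⊆ T ∧ branches P ∩ ⋃ n, A n = ∅ := by
  have hsplit : ∀ R, IsPerfectTree R → R ⊆ T → ∀ n, ∃ p R', IsSplitting R p R' ∧
      ∀ b, branches (R' b) ∩ A n = ∅ := by
    intro R hR hRT n
    obtain ⟨p, hp⟩ := hR.exists_isSplitting
    choose R' hR' hR'R hR'A using fun b =>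
      h n _ (hp b).1 fun _ hu => hRT hu.1
    exact ⟨p, R', hp.mono fun b => ⟨hR' b, hR'R b⟩, hR'A⟩
  obtain ⟨P, hP, hPT, hcover, -⟩ := hT.exists_fusion hsplit
  refine ⟨P, hP, hPT, eq_empty_iff_forall_notMem.mpr fun x ⟨hx, hxA⟩ => ?_⟩
  obtain ⟨n, hn⟩ := mem_iUnion.mp hxA
  obtain ⟨R', hR'A, b, hxb⟩ := hcover x hx n
  exact eq_empty_iff_forall_notMem.mp (hR'A b) x ⟨hxb, hn⟩

theorem nontrivial_diff_of_mk_lt {α : Type*} {s U : Set α} (hs : ℵ₀ ≤ #s) (hU : #U < #s) :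
    (s \ U).Nontrivial := by
  by_contra hsub
  rw [not_nontrivial_iff] at hsub
  have : #s ≤ 1 + #U := calc
    #s ≤ #↑(s \ U ∪ U) := mk_le_mk_of_subset fun x hx => by by_cases x ∈ U <;> simp_all
    _ ≤ #↑(s \ U) + #U := mk_union_le _ _
    _ ≤ 1 + #U := add_le_add_left (mk_le_one_iff_set_subsingleton.mpr hsub) _
  exact this.not_gt (add_lt_of_lt hs (one_lt_aleph0.trans_le hs) hU)

universe u

/-- Transfinite recursion along an enumeration of the `A i` in order type `#α`: at each step
two fresh points of `A i` are chosen, the first one for `X` and the second one for its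
complement. -/
theorem exists_inter_nonempty_and_diff_nonempty {α ι : Type u} [Infinite α] (A : ι → Set α)
    (hι : #ι ≤ #α) (hA : ∀ i, #α ≤ #(A i)) :
    ∃ X : Set α, ∀ i, (A i ∩ X).Nonempty ∧ (A i \ X).Nonempty := by
  obtain ⟨f⟩ := (le_def ι (#α).ord.ToType).mp (by rwa [mk_ord_toType])
  have hwf : WellFounded fun i j => f i < f j := InvImage.wf f wellFounded_lt
  have hstep (i : ι) (G : ∀ j, f j < f i → α × α) : ∃ z : α × α, z.1 ∈ A i ∧ z.2 ∈ A i ∧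
      z.1 ≠ z.2 ∧ ∀ j hj, z.1 ≠ (G j hj).2 ∧ z.2 ≠ (G j hj).1 := by
    set E := {j // f j < f i}
    have hIio : #(Iio (f i)) < #α := by
      simpa using mk_Iio_lt (f i) (by rw [mk_ord_toType, Ordinal.type_toType])
    have hE : #E < #α := (mk_le_of_injective (f := fun j : E => (⟨f j, j.2⟩ : Iio (f i)))
      fun j k hjk => Subtype.ext (f.injective (congrArg Subtype.val hjk))).trans_lt hIio
    set U := (range fun j : E => (G j j.2).1) ∪ range fun j : E => (G j j.2).2
    have hU : #U < #(A i) :=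
      ((mk_union_le _ _).trans (add_le_add mk_range_le mk_range_le)).trans_lt
        (add_lt_of_lt (aleph0_le_mk α) hE hE) |>.trans_le (hA i)
    obtain ⟨a, ⟨ha, haU⟩, b, ⟨hb, hbU⟩, hab⟩ :=
      nontrivial_diff_of_mk_lt ((aleph0_le_mk α).trans (hA i)) hU
    refine ⟨(a, b), ha, hb, hab, fun j hj => ?_⟩
    simp only [U, mem_union, mem_range, not_or, not_exists] at haU hbU
    exact ⟨fun e => haU.2 ⟨j, hj⟩ e.symm, fun e => hbU.1 ⟨j, hj⟩ e.symm⟩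
  set G : ι → α × α := hwf.fix fun i G => (hstep i G).choose
  have hG (i : ι) :=
    hwf.fix_eq (fun i G => (hstep i G).choose) i ▸ (hstep i fun j _ => G j).choose_spec
  refine ⟨range fun i => (G i).1, fun i => ⟨⟨_, (hG i).1, i, rfl⟩, ⟨_, (hG i).2.1, ?_⟩⟩⟩
  rintro ⟨j, hj⟩
  rcases lt_trichotomy (f j) (f i) with hji | hji | hij
  · exact ((hG i).2.2.2 j hji).2 hj.symm
  · exact (hG i).2.2.1 (f.injective hji ▸ hj)
  · exact ((hG j).2.2.2 i hij).1 hj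

def IsBernstein (X : Set (ℕ → Bool)) : Prop :=
  ∀ T, IsPerfectTree T → (branches T ∩ X).Nonempty ∧ (branches T \ X).Nonempty

theorem exists_isBernstein : ∃ X, IsBernstein X := by
  have hcard : #{T : Set (List Bool) // IsPerfectTree T} ≤ #(ℕ → Bool) :=
    (mk_subtype_le _).trans (by simp [mk_set])
  obtain ⟨X, hX⟩ := exists_inter_nonempty_and_diff_nonempty
    (fun T : {T : Set (List Bool) // IsPerfectTree T} => branches T.1) hcard
    fun T => T.2.card_branches
  exact ⟨X, fun T hT => hX ⟨T, hT⟩⟩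

theorem IsBernstein.not_marczewskiS {X A : Set (ℕ → Bool)} (hX : IsBernstein X)
    {P : Set (List Bool)} (hP : IsPerfectTree P) (hA : branches P ∩ A = branches P ∩ X) :
    ¬MarczewskiS A := by
  intro hAs
  obtain ⟨Q, hQ, hQP, hQA | hQA⟩ := hAs P hP
  · obtain ⟨x, hxQ, hxX⟩ := (hX Q hQ).2
    exact hxX (hA ▸ ⟨branches_mono hQP hxQ, hQA hxQ⟩ : x ∈ branches P ∩ X).2
  · obtain ⟨x, hxQ, hxX⟩ := (hX Q hQ).1
    exact eq_empty_iff_forall_notMem.mp hQA x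
      ⟨hxQ, (hA.symm ▸ ⟨branches_mono hQP hxQ, hxX⟩ : x ∈ branches P ∩ A).2⟩

theorem S0Set.not_branches_subset {A : Set (ℕ → Bool)} (hA : S0Set A) {T : Set (List Bool)}
    (hT : IsPerfectTree T) : ¬branches T ⊆ A := fun hTA => by
  obtain ⟨Q, hQ, hQT, hQA⟩ := hA T hT
  obtain ⟨x, hx⟩ := hQ.branches_nonempty
  exact eq_empty_iff_forall_notMem.mp hQA x ⟨hx, hTA (branches_mono hQT hx)⟩

section Colors

variable {I : Type*} {S : I → Set (ℕ → Bool)} {R T : Set (List Bool)}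

variable (S) in
def colors (R : Set (List Bool)) : Set I := {i | (S i ∩ branches R).Nonempty}

theorem colors_mono (h : R ⊆ T) : colors S R ⊆ colors S T :=
  fun _ ⟨x, hxS, hxR⟩ => ⟨x, hxS, branches_mono h hxR⟩

theorem eq_of_mem_of_mem (hdisj : Pairwise fun i j => Disjoint (S i) (S j)) {x : ℕ → Bool}
    {i j : I} (hi : x ∈ S i) (hj : x ∈ S j) : i = j :=
  by_contra fun hij => disjoint_left.mp (hdisj hij) hi hj

theorem branches_inter_biUnion_eq_empty_iff {J : Set I} :
    branches R ∩ ⋃ i ∈ J, S i = ∅ ↔ Disjoint (colors S R) J := by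
  simp only [eq_empty_iff_forall_notMem, Set.disjoint_left, colors, mem_inter_iff, mem_iUnion₂]
  exact ⟨fun h i ⟨x, hxS, hxR⟩ hiJ => h x ⟨hxR, i, hiJ, hxS⟩,
    fun h x ⟨hxR, i, hiJ, hxS⟩ => h ⟨x, hxS, hxR⟩ hiJ⟩

theorem colors_subset_of_branches_subset_biUnion
    (hdisj : Pairwise fun i j => Disjoint (S i) (S j)) {J : Set I}
    (h : branches R ⊆ ⋃ i ∈ J, S i) : colors S R ⊆ J := fun i ⟨x, hxS, hxR⟩ => by
  obtain ⟨j, hj, hxj⟩ := mem_iUnion₂.mp (h hxR)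
  exact eq_of_mem_of_mem hdisj hxj hxS ▸ hj

theorem exists_colors_subset_or_disjoint (hdisj : Pairwise fun i j => Disjoint (S i) (S j))
    {J : Set I} (hJ : MarczewskiS (⋃ i ∈ J, S i)) (hR : IsPerfectTree R) :
    ∃ R', IsPerfectTree R' ∧ R' ⊆ R ∧ (colors S R' ⊆ J ∨ Disjoint (colors S R') J) := by
  obtain ⟨R', hR', hR'R, h⟩ := hJ R hR
  exact ⟨R', hR', hR'R, h.imp (colors_subset_of_branches_subset_biUnion hdisj)
    branches_inter_biUnion_eq_empty_iff.mp⟩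

theorem exists_branches_subset_of_colors_subsingleton (hR : IsPerfectTree R)
    (hcov : branches R ⊆ ⋃ i, S i) (h : (colors S R).Subsingleton) : ∃ i, branches R ⊆ S i := by
  obtain ⟨x, hx⟩ := hR.branches_nonempty
  obtain ⟨i, hxi⟩ := mem_iUnion.mp (hcov hx)
  refine ⟨i, fun y hy => ?_⟩
  obtain ⟨j, hyj⟩ := mem_iUnion.mp (hcov hy)
  exact h ⟨x, hxi, hx⟩ ⟨y, hyj, hy⟩ ▸ hyj

end Colors

section Additive

variable {I : Type*} {S : I → Set (ℕ → Bool)} {P : Set (List Bool)}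

theorem exists_subtree_colors_subset_of_not_disjoint
    (hdisj : Pairwise fun i j => Disjoint (S i) (S j))
    (hadd : ∀ J : Set I, MarczewskiS (⋃ i ∈ J, S i))
    (hint : ∀ R₀ R₁, IsPerfectTree R₀ → IsPerfectTree R₁ → R₀ ⊆ P → R₁ ⊆ P →
      ¬Disjoint (colors S R₀) (colors S R₁))
    {K : Set I} {R₀ : Set (List Bool)} (hR₀ : IsPerfectTree R₀) (hR₀P : R₀ ⊆ P)
    (hR₀K : colors S R₀ ⊆ K) {R : Set (List Bool)} (hR : IsPerfectTree R) (hRP : R ⊆ P) :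
    ∃ R', IsPerfectTree R' ∧ R' ⊆ R ∧ colors S R' ⊆ K := by
  obtain ⟨R', hR', hR'R, hK | hK⟩ := exists_colors_subset_or_disjoint hdisj (hadd K) hR
  · exact ⟨R', hR', hR'R, hK⟩
  · exact (hint R' R₀ hR' hR₀ (hR'R.trans hRP) hR₀P (hK.mono_right hR₀K)).elim

theorem exists_subtree_branches_subset_of_not_disjoint
    (hdisj : Pairwise fun i j => Disjoint (S i) (S j))
    (hadd : ∀ J : Set I, MarczewskiS (⋃ i ∈ J, S i))
    (hP : IsPerfectTree P) (hcov : branches P ⊆ ⋃ i, S i)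
    (hint : ∀ R₀ R₁, IsPerfectTree R₀ → IsPerfectTree R₁ → R₀ ⊆ P → R₁ ⊆ P →
      ¬Disjoint (colors S R₀) (colors S R₁)) :
    ∃ Q, IsPerfectTree Q ∧ Q ⊆ P ∧ ∃ i, branches Q ⊆ S i := by
  classical
  set W : I → ℕ → Bool := fun i => if h : (S i).Nonempty then h.some else fun _ => false
  have hW (i : I) (hi : i ∈ colors S P) : W i ∈ S i := by
    simp only [W, dif_pos (hi.mono inter_subset_left)]
    exact Nonempty.some_mem _
  have hbit (n : ℕ) : ∃ b, ∀ R, IsPerfectTree R → R ⊆ P →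
      ∃ R', IsPerfectTree R' ∧ R' ⊆ R ∧ colors S R' ⊆ {i | W i n = b} := by
    obtain ⟨R₀, hR₀, hR₀P, htrue | hfalse⟩ :=
      exists_colors_subset_or_disjoint hdisj (hadd {i | W i n = true}) hP
    · exact ⟨true, fun R hR hRP => exists_subtree_colors_subset_of_not_disjoint hdisj hadd hint
        hR₀ hR₀P htrue hR hRP⟩
    · refine ⟨false, fun R hR hRP => exists_subtree_colors_subset_of_not_disjoint hdisj hadd hint
        hR₀ hR₀P (fun i hi => ?_) hR hRP⟩
      simpa using disjoint_left.mp hfalse hi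
  choose g hg using hbit
  obtain ⟨Q, hQ, hQP, hQavoid⟩ := hP.exists_subtree_inter_iUnion_eq_empty
    (fun n => ⋃ i ∈ {i | W i n = g n}ᶜ, S i) fun n R hR hRP => by
      obtain ⟨R', hR', hR'R, hR'g⟩ := hg n R hR hRP
      exact ⟨R', hR', hR'R, branches_inter_biUnion_eq_empty_iff.mpr
        (disjoint_compl_right_iff_subset.mpr hR'g)⟩
  have hWg (i : I) (hi : i ∈ colors S Q) : W i = g := funext fun n => by
    by_contra hne
    obtain ⟨x, hxS, hxQ⟩ := hi
    exact eq_empty_iff_forall_notMem.mp hQavoid x ⟨hxQ, mem_iUnion.mpr ⟨n, mem_biUnion hne hxS⟩⟩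
  refine ⟨Q, hQ, hQP, exists_branches_subset_of_colors_subsingleton hQ
    ((branches_mono hQP).trans hcov) fun i hi j hj => ?_⟩
  have hiP := colors_mono hQP hi
  have hjP := colors_mono hQP hj
  exact eq_of_mem_of_mem hdisj (hW i hiP) ((hWg i hi).trans (hWg j hj).symm ▸ hW j hjP)

theorem exists_subtree_inter_branches_subsingleton {Q : Set (List Bool)} (hQ : IsPerfectTree Q)
    (hsplit : ∀ R, IsPerfectTree R → R ⊆ Q → ∃ R₀ R₁, IsPerfectTree R₀ ∧ IsPerfectTree R₁ ∧
      R₀ ⊆ R ∧ R₁ ⊆ R ∧ Disjoint (colors S R₀) (colors S R₁)) :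
    ∃ P, IsPerfectTree P ∧ P ⊆ Q ∧ ∀ i, (S i ∩ branches P).Subsingleton := by
  have hstep : ∀ R, IsPerfectTree R → R ⊆ Q → ∀ _ : ℕ, ∃ p R', IsSplitting R p R' ∧
      Disjoint (colors S (R' false)) (colors S (R' true)) := by
    intro R hR hRQ _
    obtain ⟨R₀, R₁, hR₀, hR₁, hR₀R, hR₁R, hd⟩ := hsplit R hR hRQ
    obtain ⟨p, R', c, hR', hc₀, hc₁⟩ := exists_isSplitting_of_subset hR₀ hR₁ hR₀R hR₁R
    have hdc := hd.mono (colors_mono hc₀) (colors_mono hc₁)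
    cases c
    exacts [⟨p, R', hR', hdc⟩, ⟨p, R', hR', hdc.symm⟩]
  obtain ⟨P, hP, hPQ, -, hsep⟩ := hQ.exists_fusion hstep
  refine ⟨P, hP, hPQ, fun i x ⟨hxS, hxP⟩ y ⟨hyS, hyP⟩ => by_contra fun hxy => ?_⟩
  obtain ⟨n, R', hd, b, hxb, hyb⟩ := hsep x hxP y hyP hxy
  cases b
  exacts [disjoint_left.mp hd ⟨x, hxS, hxb⟩ ⟨y, hyS, hyb⟩,
    disjoint_left.mp hd ⟨y, hyS, hyb⟩ ⟨x, hxS, hxb⟩]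

theorem exists_not_marczewskiS_biUnion (hP : IsPerfectTree P) (hcov : branches P ⊆ ⋃ i, S i)
    (hsub : ∀ i, (S i ∩ branches P).Subsingleton) : ∃ J : Set I, ¬MarczewskiS (⋃ i ∈ J, S i) := by
  obtain ⟨X, hX⟩ := exists_isBernstein
  refine ⟨{i | (S i ∩ branches P ∩ X).Nonempty}, hX.not_marczewskiS hP ?_⟩
  ext x
  simp only [mem_inter_iff, mem_iUnion₂, mem_ofPred_eq]
  refine ⟨fun ⟨hxP, i, ⟨y, ⟨hyS, hyP⟩, hyX⟩, hxS⟩ => ⟨hxP, hsub i ⟨hyS, hyP⟩ ⟨hxS, hxP⟩ ▸ hyX⟩,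
    fun ⟨hxP, hxX⟩ => ?_⟩
  obtain ⟨i, hxS⟩ := mem_iUnion.mp (hcov hxP)
  exact ⟨hxP, i, ⟨x, ⟨hxS, hxP⟩, hxX⟩, hxS⟩

theorem not_branches_subset_iUnion (hdisj : Pairwise fun i j => Disjoint (S i) (S j))
    (h0 : ∀ i, S0Set (S i)) (hadd : ∀ J : Set I, MarczewskiS (⋃ i ∈ J, S i))
    {Q : Set (List Bool)} (hQ : IsPerfectTree Q) : ¬branches Q ⊆ ⋃ i, S i := by
  intro hcov
  by_cases hcase : ∃ P, IsPerfectTree P ∧ P ⊆ Q ∧ ∀ R₀ R₁, IsPerfectTree R₀ → IsPerfectTree R₁ →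
      R₀ ⊆ P → R₁ ⊆ P → ¬Disjoint (colors S R₀) (colors S R₁)
  · obtain ⟨P, hP, hPQ, hint⟩ := hcase
    obtain ⟨R, hR, -, i, hRi⟩ := exists_subtree_branches_subset_of_not_disjoint hdisj hadd hP
      ((branches_mono hPQ).trans hcov) hint
    exact (h0 i).not_branches_subset hR hRi
  · push Not at hcase
    obtain ⟨P, hP, hPQ, hsub⟩ := exists_subtree_inter_branches_subsingleton hQ hcase
    obtain ⟨J, hJ⟩ := exists_not_marczewskiS_biUnion hP ((branches_mono hPQ).trans hcov) hsub
    exact hJ (hadd J)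

end Additive

/-- If a pairwise disjoint family of (s⁰)-sets is (s)-additive, then its union is an (s⁰)-set. -/
theorem s0_of_disjoint_s_additive {I : Type*} (S : I → Set (ℕ → Bool))
    (hdisj : Pairwise fun i j => Disjoint (S i) (S j))
    (h0 : ∀ i, S0Set (S i))
    (hadd : ∀ J : Set I, MarczewskiS (⋃ i ∈ J, S i)) :
    S0Set (⋃ i, S i) := by
  intro T hT
  obtain ⟨Q, hQ, hQT, hcase⟩ := hadd univ T hT
  simp only [mem_univ, iUnion_true] at hcase
  exact ⟨Q, hQ, hQT, hcase.resolve_left (not_branches_subset_iUnion hdisj h0 hadd hQ)⟩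
end

section
/- If {M_i : i ∈ I} is a pairwise disjoint family of Ramsey null subsets of [ω]^ω that is CR-additive (i.e., for every J ⊆ I the union ⋃_{i∈J} M_i is completely Ramsey), then ⋃_{i∈I} M_i is Ramsey null. -/
open Set

/-- The Ellentuck basic set `[a, A]` of infinite sets `B` with `a ⊆ B ⊆ a ∪ A`. -/
def EllSet (a : Finset ℕ) (A : Set ℕ) : Set (Set ℕ) :=
  {B | B.Infinite ∧ ↑a ⊆ B ∧ B ⊆ ↑a ∪ A}

/-- `M` is completely Ramsey. -/
def CRSet (M : Set (Set ℕ)) : Prop :=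
  ∀ (a : Finset ℕ) (A : Set ℕ), A.Infinite →
    ∃ B ⊆ A, B.Infinite ∧ (EllSet a B ⊆ M ∨ EllSet a B ∩ M = ∅)

/-- `M` is Ramsey null. -/
def RamseyNull (M : Set (Set ℕ)) : Prop :=
  ∀ (a : Finset ℕ) (A : Set ℕ), A.Infinite →
    ∃ B ⊆ A, B.Infinite ∧ EllSet a B ∩ M = ∅

/-!
Suppose some cube `[a, B]` is covered by the `M i`. Pick a representative `x i ∈ M i` of each
nonempty piece and code `C` by `ψ C = {m | C ∈ ⋃ {M i | m ∈ x i}}`, which is the representative of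
the piece containing `C`. Every preimage of `ψ` agrees on `[a, B]` with a union of a subfamily,
hence is completely Ramsey. Fusion shrinks `B` to `Z` on which each coordinate `m ∈ ψ C` depends
only on a finite initial segment of `C`. As each `M i` is Ramsey null, `ψ` is constant on no
subcube, so a Cantor scheme shows that `ψ` takes continuum many values on every `[a, W]`,
`W ⊆ Z`. A Bernstein set `Y` of codes meets and misses all these sets of values, and then no
`[a, W]` decides the union of the `M i` with `x i ∈ Y`.
-/

open Cardinal

universe u

theorem ellSet_mono {s : Finset ℕ} {A B : Set ℕ} (h : A ⊆ B) : EllSet s A ⊆ EllSet s B :=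
  fun _ ⟨hC, hsC, hCA⟩ => ⟨hC, hsC, hCA.trans (union_subset_union_right _ h)⟩

theorem union_mem_ellSet {s : Finset ℕ} {A : Set ℕ} (hA : A.Infinite) : ↑s ∪ A ∈ EllSet s A :=
  ⟨hA.mono subset_union_right, subset_union_left, subset_rfl⟩

theorem RamseyNull.not_ellSet_subset {M : Set (Set ℕ)} (hM : RamseyNull M) (s : Finset ℕ)
    {A : Set ℕ} (hA : A.Infinite) : ¬EllSet s A ⊆ M := fun hsub => by
  obtain ⟨B, hBA, hB, hBM⟩ := hM s A hA
  exact hBM.subset ⟨union_mem_ellSet hB, hsub (ellSet_mono hBA (union_mem_ellSet hB))⟩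

def Decides (N : Set (Set ℕ)) (s : Finset ℕ) (T : Set ℕ) : Prop :=
  EllSet s T ⊆ N ∨ EllSet s T ∩ N = ∅

section Decides

variable {N : Set (Set ℕ)} {s : Finset ℕ} {T : Set ℕ}

theorem Decides.mono {T' : Set ℕ} (h : Decides N s T) (hT : T' ⊆ T) : Decides N s T' :=
  h.imp (ellSet_mono hT).trans fun h : EllSet s T ∩ N = ∅ =>
    subset_empty_iff.1 (h ▸ inter_subset_inter_left N (ellSet_mono hT))

theorem Decides.mem_iff {C D : Set ℕ} (h : Decides N s T) (hC : C ∈ EllSet s T)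
    (hD : D ∈ EllSet s T) : C ∈ N ↔ D ∈ N := by
  rcases h with h | h
  · exact iff_of_true (h hC) (h hD)
  · exact iff_of_false (fun hN => h.subset ⟨hC, hN⟩) (fun hN => h.subset ⟨hD, hN⟩)

theorem CRSet.exists_decides_finset (hN : CRSet N) (S : Finset (Finset ℕ)) (hT : T.Infinite) :
    ∃ T' ⊆ T, T'.Infinite ∧ ∀ s ∈ S, Decides N s T' := by
  classical
  induction S using Finset.induction_on with
  | empty => exact ⟨T, subset_rfl, hT, by simp⟩
  | insert s S _ ih =>
    obtain ⟨T₁, hT₁T, hT₁, hS⟩ := ih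
    obtain ⟨T₂, hT₂T₁, hT₂, hs⟩ := hN s T₁ hT₁
    exact ⟨T₂, hT₂T₁.trans hT₁T, hT₂,
      (Finset.forall_mem_insert _ _ _).2 ⟨hs, fun t ht => (hS t ht).mono hT₂T₁⟩⟩

end Decides

def FinitelyDeterminedOn (N E : Set (Set ℕ)) : Prop :=
  ∃ k, ∀ C ∈ E, ∀ D ∈ E, (∀ y ≤ k, y ∈ C ↔ y ∈ D) → (C ∈ N ↔ D ∈ N)

theorem exists_finitelyDeterminedOn {N : ℕ → Set (Set ℕ)} (hN : ∀ n, CRSet (N n))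
    (a : Finset ℕ) {B : Set ℕ} (hB : B.Infinite) :
    ∃ Z ⊆ B, Z.Infinite ∧ ∀ n, FinitelyDeterminedOn (N n) (EllSet a Z) := by
  classical
  -- Stage `n` picks `c n` and decides `N n` at every stem `a ∪ u`, `u ⊆ [0, c n]`, so for
  -- `C ∈ [a, range c]` membership in `N n` only depends on the stem `a ∪ (C ∩ [0, c n])`.
  have step : ∀ n (T : {T : Set ℕ // T.Infinite}), ∃ k ∈ T.1, ∃ T' : {T : Set ℕ // T.Infinite},
      T'.1 ⊆ T.1 \ Iic k ∧ ∀ u ⊆ Finset.range (k + 1), Decides (N n) (a ∪ u) T'.1 := by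
    rintro n ⟨T, hT⟩
    obtain ⟨k, hk⟩ := hT.nonempty
    obtain ⟨T', hT'T, hT', hdec⟩ := (hN n).exists_decides_finset
      ((Finset.range (k + 1)).powerset.image (a ∪ ·)) (hT.sdiff (finite_Iic k))
    exact ⟨k, hk, ⟨T', hT'⟩, hT'T, fun u hu =>
      hdec _ (Finset.mem_image_of_mem _ (Finset.mem_powerset.2 hu))⟩
  choose k hkT T hTsub hdec using step
  let Bs : ℕ → {T : Set ℕ // T.Infinite} := fun n => Nat.rec ⟨B, hB⟩ (fun n Tn => T n Tn) n
  set c : ℕ → ℕ := fun n => k n (Bs n)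
  have hBs : Antitone fun n => (Bs n).1 :=
    antitone_nat_of_succ_le fun n => (hTsub n _).trans sdiff_subset
  have hc_lt : ∀ n, ∀ y ∈ (Bs (n + 1)).1, c n < y := fun n y hy =>
    not_le.1 (hTsub n _ hy).2
  have hc : StrictMono c := strictMono_nat_of_lt_succ fun n => hc_lt n _ (hkT _ _)
  refine ⟨range c, ?_, infinite_range_of_injective hc.injective, fun n => ⟨c n, ?_⟩⟩
  · rintro _ ⟨m, rfl⟩
    exact hBs (Nat.zero_le m) (hkT _ _)
  have hcube : ∀ C ∈ EllSet a (range c),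
      C ∈ EllSet (a ∪ (Finset.range (c n + 1)).filter (· ∈ C)) (Bs (n + 1)).1 := by
    rintro C ⟨hC, haC, hCc⟩
    refine ⟨hC, ?_, fun y hy => ?_⟩
    · simp only [Finset.coe_union, Finset.coe_filter, union_subset_iff]
      exact ⟨haC, fun y hy => hy.2⟩
    · simp only [Finset.coe_union, Finset.coe_filter, Finset.mem_range, mem_union,
        mem_ofPred_eq]
      rcases hCc hy with hya | ⟨m, rfl⟩
      · exact .inl (.inl hya)
      rcases le_or_gt m n with hmn | hnm
      · exact .inl (.inr ⟨Nat.lt_succ_of_le (hc.monotone hmn), hy⟩)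
      · exact .inr (hBs hnm (hkT _ _))
  intro C hC D hD hCD
  have hu : (Finset.range (c n + 1)).filter (· ∈ C) =
      (Finset.range (c n + 1)).filter (· ∈ D) :=
    Finset.filter_congr fun y hy => hCD y (Nat.lt_succ_iff.1 (Finset.mem_range.1 hy))
  exact (hdec n _ _ (Finset.filter_subset _ _)).mem_iff (hcube C hC) (hu ▸ hcube D hD)

def Refines (t : Finset ℕ) (V : Set ℕ) (s : Finset ℕ) (W : Set ℕ) : Prop :=
  s ⊂ t ∧ ↑t ⊆ ↑s ∪ W ∧ V ⊆ W

theorem Refines.ellSet_subset {t s : Finset ℕ} {V W : Set ℕ} (h : Refines t V s W) :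
    EllSet t V ⊆ EllSet s W := fun _ ⟨hC, htC, hCV⟩ =>
  ⟨hC, (Finset.coe_subset.2 h.1.subset).trans htC,
    hCV.trans (union_subset h.2.1 (h.2.2.trans subset_union_right))⟩

theorem iUnion_mem_ellSet {s : ℕ → Finset ℕ} {W : ℕ → Set ℕ}
    (h : ∀ k, Refines (s (k + 1)) (W (k + 1)) (s k) (W k)) (k : ℕ) :
    (⋃ l, (s l : Set ℕ)) ∈ EllSet (s k) (W k) := by
  have hs : StrictMono s := strictMono_nat_of_lt_succ fun k => (h k).1
  have hW : Antitone W := antitone_nat_of_succ_le fun k => (h k).2.2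
  have hsW : ∀ l, (s l : Set ℕ) ⊆ s k ∪ W k := by
    intro l
    rcases le_or_gt l k with hlk | hkl
    · exact (Finset.coe_subset.2 (hs.monotone hlk)).trans subset_union_left
    induction l, hkl using Nat.le_induction with
    | base => exact (h k).2.1
    | succ l hkl ih =>
      exact (h l).2.1.trans
        (union_subset ih ((hW (Nat.le_of_succ_le hkl)).trans subset_union_right))
  exact ⟨infinite_iUnion (Finset.coe_injective.comp hs.injective),
    subset_iUnion (fun l => (s l : Set ℕ)) k, iUnion_subset hsW⟩

theorem exists_refines_forall_agree {s : Finset ℕ} {W C : Set ℕ} (hW : W.Infinite)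
    (hC : C ∈ EllSet s W) (k : ℕ) :
    ∃ t V, Refines t V s W ∧ V.Infinite ∧ ∀ D ∈ EllSet t V, ∀ y ≤ k, y ∈ D ↔ y ∈ C := by
  classical
  obtain ⟨e, heC, hes⟩ := (hC.1.sdiff s.finite_toSet).nonempty
  obtain ⟨n, hn⟩ := s.bddAbove
  set N := max k (max e n)
  have hsN : ∀ y ∈ s, y ≤ N := fun y hy => (hn hy).trans (by omega)
  refine ⟨(Finset.range (N + 1)).filter (· ∈ C), W \ Iic N, ⟨?_, ?_, sdiff_subset⟩,
    hW.sdiff (finite_Iic N), fun D ⟨_, htD, hDt⟩ y hy => ⟨fun hyD => ?_, fun hyC => ?_⟩⟩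
  · refine Finset.ssubset_iff_of_subset (fun y hy => ?_) |>.2 ⟨e, ?_, hes⟩
    · simpa [Nat.lt_succ_iff] using ⟨hsN y hy, hC.2.1 hy⟩
    · simpa [Nat.lt_succ_iff] using ⟨by omega, heC⟩
  · intro y hy
    exact hC.2.2 (Finset.mem_filter.1 hy).2
  · rcases hDt hyD with hyt | hyV
    · exact (Finset.mem_filter.1 hyt).2
    · exact (hyV.2 (show y ≤ N by omega)).elim
  · exact htD (by simpa [Nat.lt_succ_iff] using ⟨by omega, hyC⟩)

theorem exists_injective_comp_of_forall_split {β : Type*} (φ : Set ℕ → β)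
    (P : Finset ℕ → Set ℕ → Prop)
    (split : ∀ s W, P s W → ∃ t₀ V₀ t₁ V₁, P t₀ V₀ ∧ P t₁ V₁ ∧
      Refines t₀ V₀ s W ∧ Refines t₁ V₁ s W ∧ Disjoint (φ '' EllSet t₀ V₀) (φ '' EllSet t₁ V₁))
    {s : Finset ℕ} {W : Set ℕ} (hsW : P s W) :
    ∃ g : (ℕ → Bool) → Set ℕ, (∀ b, g b ∈ EllSet s W) ∧ Function.Injective (φ ∘ g) := by
  let Node := {p : Finset ℕ × Set ℕ // P p.1 p.2}
  have hchild : ∀ p : Node, ∃ q : Bool → Node,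
      (∀ b, Refines (q b).1.1 (q b).1.2 p.1.1 p.1.2) ∧
      ∀ b, Disjoint (φ '' EllSet (q b).1.1 (q b).1.2) (φ '' EllSet (q !b).1.1 (q !b).1.2) := by
    rintro ⟨⟨s, W⟩, hsW⟩
    obtain ⟨t₀, V₀, t₁, V₁, h₀, h₁, hr₀, hr₁, hdisj⟩ := split s W hsW
    refine ⟨fun b => if b then ⟨(t₀, V₀), h₀⟩ else ⟨(t₁, V₁), h₁⟩, fun b => ?_, fun b => ?_⟩
    · cases b <;> assumption
    · cases b
      · exact hdisj.symm
      · exact hdisj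
  choose child hrefines hdisj using hchild
  let path : (ℕ → Bool) → ℕ → Node := fun b k =>
    Nat.rec ⟨(s, W), hsW⟩ (fun k p => child p (b k)) k
  have hpath : ∀ b k,
      Refines (path b (k + 1)).1.1 (path b (k + 1)).1.2 (path b k).1.1 (path b k).1.2 :=
    fun b k => hrefines _ _
  have hagree : ∀ b b' k, (∀ j < k, b j = b' j) → path b k = path b' k := by
    intro b b' k
    induction k with
    | zero => exact fun _ => rfl
    | succ k ih =>
      intro h
      change child (path b k) (b k) = child (path b' k) (b' k)
      rw [ih fun j hj => h j (by omega), h k (by omega)]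
  refine ⟨fun b => ⋃ k, ((path b k).1.1 : Set ℕ), fun b => iUnion_mem_ellSet (hpath b) 0,
    fun b b' hbb' => funext fun k => ?_⟩
  induction k using Nat.strong_induction_on with
  | _ k ih =>
  by_contra hne
  have hk : path b k = path b' k := hagree b b' k ih
  have hb' : b' k = !b k := by cases h : b k <;> cases h' : b' k <;> simp_all
  exact Set.disjoint_left.1 (hdisj (path b k) (b k))
    ⟨_, iUnion_mem_ellSet (hpath b) (k + 1), rfl⟩
    ⟨_, hk ▸ hb' ▸ iUnion_mem_ellSet (hpath b') (k + 1), hbb'.symm⟩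

theorem FinitelyDeterminedOn.congr {N N' E : Set (Set ℕ)} (h : FinitelyDeterminedOn N E)
    (hNN' : ∀ C ∈ E, C ∈ N ↔ C ∈ N') : FinitelyDeterminedOn N' E := by
  obtain ⟨k, hk⟩ := h
  exact ⟨k, fun C hC D hD hCD =>
    (hNN' C hC).symm.trans ((hk C hC D hD hCD).trans (hNN' D hD))⟩

theorem mk_set_nat_le_mk_image_ellSet (ψ : Set ℕ → Set ℕ) {E : Set (Set ℕ)}
    (hψ : ∀ m, FinitelyDeterminedOn {C | m ∈ ψ C} E)
    (hnt : ∀ s W, W.Infinite → EllSet s W ⊆ E → (ψ '' EllSet s W).Nontrivial)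
    {s : Finset ℕ} {W : Set ℕ} (hW : W.Infinite) (hsW : EllSet s W ⊆ E) :
    #(Set ℕ) ≤ #(ψ '' EllSet s W) := by
  have split : ∀ s W, W.Infinite ∧ EllSet s W ⊆ E → ∃ t₀ V₀ t₁ V₁,
      (V₀.Infinite ∧ EllSet t₀ V₀ ⊆ E) ∧ (V₁.Infinite ∧ EllSet t₁ V₁ ⊆ E) ∧
      Refines t₀ V₀ s W ∧ Refines t₁ V₁ s W ∧
      Disjoint (ψ '' EllSet t₀ V₀) (ψ '' EllSet t₁ V₁) := by
    rintro s W ⟨hW, hsW⟩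
    obtain ⟨_, ⟨C, hC, rfl⟩, _, ⟨D, hD, rfl⟩, hCD⟩ := hnt s W hW hsW
    obtain ⟨m, hm⟩ : ∃ m, ¬(m ∈ ψ C ↔ m ∈ ψ D) := not_forall.1 fun h => hCD (Set.ext h)
    obtain ⟨k, hk⟩ := hψ m
    obtain ⟨t₀, V₀, hr₀, hV₀, hagree₀⟩ := exists_refines_forall_agree hW hC k
    obtain ⟨t₁, V₁, hr₁, hV₁, hagree₁⟩ := exists_refines_forall_agree hW hD k
    refine ⟨t₀, V₀, t₁, V₁, ⟨hV₀, hr₀.ellSet_subset.trans hsW⟩,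
      ⟨hV₁, hr₁.ellSet_subset.trans hsW⟩, hr₀, hr₁, Set.disjoint_left.2 ?_⟩
    rintro _ ⟨X, hX, rfl⟩ ⟨Y, hY, hYX⟩
    have hX' := hr₀.ellSet_subset hX
    have hY' := hr₁.ellSet_subset hY
    refine hm ((hk C (hsW hC) X (hsW hX') fun y hy => (hagree₀ X hX y hy).symm).trans ?_)
    change m ∈ ψ X ↔ m ∈ ψ D
    rw [← hYX]
    exact hk Y (hsW hY') D (hsW hD) (hagree₁ Y hY)
  obtain ⟨g, hg, hinj⟩ := exists_injective_comp_of_forall_split ψ _ split ⟨hW, hsW⟩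
  calc #(Set ℕ) = #(ℕ → Bool) := by
        rw [mk_set, ← power_def, mk_bool]
    _ ≤ #(ψ '' EllSet s W) :=
        mk_le_of_injective (f := fun b => ⟨ψ (g b), g b, hg b, rfl⟩) fun b b' h =>
          hinj (congrArg Subtype.val h)

theorem exists_bernstein_of_wellFoundedLT {α ι : Type u} [Infinite α] [LinearOrder ι]
    [WellFoundedLT ι] (F : ι → Set α) (hι : ∀ j : ι, #(Iio j) < #α) (hF : ∀ j, #α ≤ #(F j)) :
    ∃ Y : Set α, ∀ j, (F j ∩ Y).Nonempty ∧ (F j \ Y).Nonempty := by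
  -- Stage `j` picks two new points of `F j`, avoiding all points picked at earlier stages;
  -- `Y` collects the first ones.
  have step : ∀ j (prev : ∀ k < j, α × α), ∃ p : α × α, p.1 ∈ F j ∧ p.2 ∈ F j ∧ p.1 ≠ p.2 ∧
      ∀ k (hk : k < j), p.1 ≠ (prev k hk).2 ∧ p.2 ≠ (prev k hk).1 := by
    intro j prev
    set S : Set α :=
      (range fun k : Iio j => (prev k k.2).1) ∪ range fun k : Iio j => (prev k k.2).2
    have hS : #S < #α := (mk_union_le _ _).trans_lt <|
      add_lt_of_lt (aleph0_le_mk α) (mk_range_le.trans_lt (hι j)) (mk_range_le.trans_lt (hι j))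
    obtain ⟨y₀, hy₀F, hy₀S⟩ := sdiff_nonempty_of_mk_lt_mk (hS.trans_le (hF j))
    have hS' : #(insert y₀ S : Set α) < #α := mk_insert_le.trans_lt <|
      add_lt_of_lt (aleph0_le_mk α) hS (one_lt_aleph0.trans_le (aleph0_le_mk α))
    obtain ⟨y₁, hy₁F, hy₁S⟩ := sdiff_nonempty_of_mk_lt_mk (hS'.trans_le (hF j))
    refine ⟨(y₀, y₁), hy₀F, hy₁F, fun h => hy₁S (.inl h.symm), fun k hk => ⟨?_, ?_⟩⟩
    · exact fun h => hy₀S (Or.inr ⟨⟨k, hk⟩, h.symm⟩)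
    · exact fun h => hy₁S (Or.inr (Or.inl ⟨⟨k, hk⟩, h.symm⟩))
  choose next hnext using step
  set p : ι → α × α := WellFoundedLT.fix next
  have hp : ∀ j, (p j).1 ∈ F j ∧ (p j).2 ∈ F j ∧ (p j).1 ≠ (p j).2 ∧
      ∀ k < j, (p j).1 ≠ (p k).2 ∧ (p j).2 ≠ (p k).1 :=
    fun j => by rw [show p j = _ from WellFoundedLT.fix_eq next j]; exact hnext j _
  refine ⟨range fun j => (p j).1, fun j => ⟨⟨_, (hp j).1, j, rfl⟩, _, (hp j).2.1, ?_⟩⟩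
  rintro ⟨k, hk⟩
  rcases lt_trichotomy k j with hkj | rfl | hjk
  · exact ((hp j).2.2.2 k hkj).2 hk.symm
  · exact (hp k).2.2.1 hk
  · exact ((hp k).2.2.2 j hjk).1 hk

theorem exists_bernstein {α ι : Type u} [Infinite α] (F : ι → Set α) (hι : #ι ≤ #α)
    (hF : ∀ j, #α ≤ #(F j)) : ∃ Y : Set α, ∀ j, (F j ∩ Y).Nonempty ∧ (F j \ Y).Nonempty := by
  have hcard : #(#ι).ord.ToType = #ι := by rw [mk_toType, card_ord]
  obtain ⟨e⟩ := Cardinal.eq.1 hcard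
  obtain ⟨Y, hY⟩ := exists_bernstein_of_wellFoundedLT (F ∘ e)
    (fun j => (mk_Iio_lt j (by rw [hcard, Ordinal.type_toType])).trans_le (hcard.trans_le hι))
    (fun j => hF _)
  exact ⟨Y, fun j => by simpa using hY (e.symm j)⟩

theorem exists_ellSet_image_subsingleton (ψ : Set ℕ → Set ℕ) {a : Finset ℕ} {B : Set ℕ}
    (hB : B.Infinite)
    (hψ : ∀ Y : Set (Set ℕ), ∃ N, CRSet N ∧ ∀ C ∈ EllSet a B, C ∈ N ↔ ψ C ∈ Y) :
    ∃ s W, W.Infinite ∧ EllSet s W ⊆ EllSet a B ∧ (ψ '' EllSet s W).Subsingleton := by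
  choose N hNCR hN using hψ
  obtain ⟨Z, hZB, hZ, hdet⟩ := exists_finitelyDeterminedOn (fun m => hNCR {y | m ∈ y}) a hB
  have hZB' : EllSet a Z ⊆ EllSet a B := ellSet_mono hZB
  by_contra! hnt
  have hψZ : ∀ m, FinitelyDeterminedOn {C | m ∈ ψ C} (EllSet a Z) := fun m =>
    (hdet m).congr fun C hC => hN _ C (hZB' hC)
  obtain ⟨Y, hY⟩ := exists_bernstein
    (fun W : {W : Set ℕ // W ⊆ Z ∧ W.Infinite} => ψ '' EllSet a W) (mk_subtype_le _)
    fun W => mk_set_nat_le_mk_image_ellSet ψ hψZ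
      (fun s W hW hsW => hnt s W hW (hsW.trans hZB')) W.2.2 (ellSet_mono W.2.1)
  obtain ⟨W, hWZ, hW, hdec⟩ := hNCR Y a Z hZ
  obtain ⟨⟨_, ⟨C, hC, rfl⟩, hCY⟩, ⟨_, ⟨D, hD, rfl⟩, hDY⟩⟩ := hY ⟨W, hWZ, hW⟩
  have hWB : EllSet a W ⊆ EllSet a B := ellSet_mono (hWZ.trans hZB)
  exact hDY ((hN Y D (hWB hD)).1 ((Decides.mem_iff hdec hC hD).1 ((hN Y C (hWB hC)).2 hCY)))

theorem not_ellSet_subset_iUnion {I : Type*} (M : I → Set (Set ℕ))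
    (hdisj : Pairwise fun i j => Disjoint (M i) (M j)) (h0 : ∀ i, RamseyNull (M i))
    (hadd : ∀ J : Set I, CRSet (⋃ i ∈ J, M i)) (a : Finset ℕ) {B : Set ℕ} (hB : B.Infinite) :
    ¬EllSet a B ⊆ ⋃ i, M i := by
  intro hcov
  have hunique : ∀ {C i j}, C ∈ M i → C ∈ M j → i = j := fun hi hj =>
    hdisj.eq (not_disjoint_iff.2 ⟨_, hi, hj⟩)
  have hrep : ∀ i, ∃ x : Set ℕ, ∀ C ∈ M i, x ∈ M i := fun i => by
    by_cases h : (M i).Nonempty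
    · exact ⟨h.some, fun _ _ => h.some_mem⟩
    · exact ⟨∅, fun C hC => (h ⟨C, hC⟩).elim⟩
  choose x hx using hrep
  set ψ : Set ℕ → Set ℕ := fun C => {m | C ∈ ⋃ i ∈ {i | m ∈ x i}, M i}
  have hψ : ∀ {C i}, C ∈ M i → ψ C = x i := fun hC => Set.ext fun m => by
    simp only [ψ, mem_iUnion, exists_prop, mem_ofPred_eq]
    exact ⟨fun ⟨j, hj, hCj⟩ => hunique hCj hC ▸ hj, fun h => ⟨_, h, hC⟩⟩
  obtain ⟨s, W, hW, hsW, hconst⟩ := exists_ellSet_image_subsingleton ψ hB fun Y =>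
    ⟨⋃ i ∈ {i | x i ∈ Y}, M i, hadd _, fun C hC => by
      obtain ⟨i, hi⟩ := mem_iUnion.1 (hcov hC)
      simp only [mem_iUnion, exists_prop, mem_ofPred_eq, hψ hi]
      exact ⟨fun ⟨j, hj, hCj⟩ => hunique hCj hi ▸ hj, fun h => ⟨_, h, hi⟩⟩⟩
  obtain ⟨i, hi⟩ := mem_iUnion.1 (hcov (hsW (union_mem_ellSet hW)))
  refine (h0 i).not_ellSet_subset s hW fun D hD => ?_
  obtain ⟨j, hj⟩ := mem_iUnion.1 (hcov (hsW hD))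
  have hxji : x j = x i :=
    (hψ hj).symm.trans ((hconst ⟨D, hD, rfl⟩ ⟨_, union_mem_ellSet hW, rfl⟩).trans (hψ hi))
  rwa [hunique (hx j D hj) (hxji ▸ hx i _ hi)] at hj

/-- If a pairwise disjoint family of Ramsey null sets is CR-additive, then its union is Ramsey null. -/
theorem ramseyNull_of_disjoint_CR_additive {I : Type*} (M : I → Set (Set ℕ))
    (hdisj : Pairwise fun i j => Disjoint (M i) (M j))
    (h0 : ∀ i, RamseyNull (M i))
    (hadd : ∀ J : Set I, CRSet (⋃ i ∈ J, M i)) :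
    RamseyNull (⋃ i, M i) := by
  intro a A hA
  obtain ⟨B, hBA, hB, hcov | hempty⟩ := hadd univ a A hA
  · exact (not_ellSet_subset_iUnion M hdisj h0 hadd a hB (by simpa using hcov)).elim
  · exact ⟨B, hBA, hB, by simpa using hempty⟩
end

section
/- The family of Ramsey null sets forms a σ-ideal on [ω]^ω: it contains the empty set and is closed under subsets and countable unions. -/
/-!
For a countable union `⋃ n, M n` we fuse: build a decreasing sequence of infinite sets `A j` with
minima `x j`, where `A (j + 1)` lies above `x j` and, shrinking finitely often, misses
`M 0, …, M j` on every stem `b ⊆ [0, x j]`. Then every `C ∈ [a, {x j | j}] ∩ M n` is caught: for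
`j ≥ n` large and `b = C ∩ [0, x j]`, the rest of `C` consists of later `x k`, so
`C ∈ [b, A (j + 1)]`, which misses `M n`.
-/
open Set

theorem ellSet_mono_s3 (a : Finset ℕ) : Monotone (EllSet a) :=
  fun _ _ h _ hC => ⟨hC.1, hC.2.1, hC.2.2.trans (union_subset_union_right _ h)⟩

theorem ramseyNull_empty : RamseyNull ∅ :=
  fun _ A hA => ⟨A, Subset.rfl, hA, inter_empty _⟩

theorem RamseyNull.mono {M N : Set (Set ℕ)} (hN : RamseyNull N) (h : M ⊆ N) : RamseyNull M := by
  intro a A hA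
  obtain ⟨B, hBA, hB, hBN⟩ := hN a A hA
  exact ⟨B, hBA, hB, subset_empty_iff.mp (hBN ▸ inter_subset_inter_right _ h)⟩

theorem exists_subset_forall_ellSet_inter_eq_empty {ι : Type*} {M : ι → Set (Set ℕ)}
    (a : ι → Finset ℕ) (s : Finset ι) (hM : ∀ i ∈ s, RamseyNull (M i)) {A : Set ℕ}
    (hA : A.Infinite) : ∃ B ⊆ A, B.Infinite ∧ ∀ i ∈ s, EllSet (a i) B ∩ M i = ∅ := by
  classical
  induction s using Finset.induction_on with
  | empty => exact ⟨A, Subset.rfl, hA, by simp⟩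
  | insert i s _ ih =>
    obtain ⟨B, hBA, hB, hBs⟩ := ih fun j hj => hM j (Finset.mem_insert_of_mem hj)
    obtain ⟨B', hB'B, hB', hB'i⟩ := hM i (Finset.mem_insert_self i s) (a i) B hB
    refine ⟨B', hB'B.trans hBA, hB', Finset.forall_mem_insert _ _ _ |>.mpr ⟨hB'i, ?_⟩⟩
    exact fun j hj => subset_empty_iff.mp <|
      hBs j hj ▸ inter_subset_inter_left _ (ellSet_mono_s3 _ hB'B)

theorem exists_fusion_sequence {M : ℕ → Set (Set ℕ)} (hM : ∀ n, RamseyNull (M n))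
    {A : Set ℕ} (hA : A.Infinite) :
    ∃ As : ℕ → Set ℕ, As 0 = A ∧ (∀ j, (As j).Infinite) ∧
      (∀ j, As (j + 1) ⊆ As j \ Iic (sInf (As j))) ∧
      ∀ j, ∀ b ⊆ Finset.range (sInf (As j) + 1), ∀ n ≤ j, EllSet b (As (j + 1)) ∩ M n = ∅ := by
  have step (j : ℕ) (B : Set ℕ) (hB : B.Infinite) : ∃ B' ⊆ B \ Iic (sInf B), B'.Infinite ∧
      ∀ b ⊆ Finset.range (sInf B + 1), ∀ n ≤ j, EllSet b B' ∩ M n = ∅ := by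
    obtain ⟨B', hB'B, hB', hkill⟩ := exists_subset_forall_ellSet_inter_eq_empty Prod.fst
      ((Finset.range (sInf B + 1)).powerset ×ˢ Finset.range (j + 1)) (fun p _ => hM p.2)
      (hB.sdiff (finite_Iic _))
    exact ⟨B', hB'B, hB', fun b hb n hn => hkill (b, n) (by simp [hb, hn])⟩
  choose! next hnext_sub hnext_inf hnext_kill using step
  let As : ℕ → Set ℕ := fun j => Nat.rec A (fun j B => next j B) j
  have hAs (j : ℕ) : (As j).Infinite := Nat.rec hA (fun j ih => hnext_inf j _ ih) j
  exact ⟨As, rfl, hAs, fun j => hnext_sub j _ (hAs j), fun j => hnext_kill j _ (hAs j)⟩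

section Fusion

variable {As : ℕ → Set ℕ}

theorem sInf_mem_of_le (h_inf : ∀ j, (As j).Infinite)
    (h_sub : ∀ j, As (j + 1) ⊆ As j \ Iic (sInf (As j))) {j k : ℕ} (hjk : j ≤ k) :
    sInf (As k) ∈ As j :=
  antitone_nat_of_succ_le (fun i => (h_sub i).trans sdiff_subset) hjk
    (Nat.sInf_mem (h_inf k).nonempty)

theorem strictMono_sInf (h_inf : ∀ j, (As j).Infinite)
    (h_sub : ∀ j, As (j + 1) ⊆ As j \ Iic (sInf (As j))) : StrictMono fun j => sInf (As j) :=
  strictMono_nat_of_lt_succ fun j =>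
    not_le.mp (h_sub j (Nat.sInf_mem (h_inf (j + 1)).nonempty)).2

theorem ellSet_range_sInf_inter_iUnion_eq_empty {M : ℕ → Set (Set ℕ)}
    (h_inf : ∀ j, (As j).Infinite) (h_sub : ∀ j, As (j + 1) ⊆ As j \ Iic (sInf (As j)))
    (h_kill : ∀ j, ∀ b ⊆ Finset.range (sInf (As j) + 1), ∀ n ≤ j,
      EllSet b (As (j + 1)) ∩ M n = ∅)
    (a : Finset ℕ) : EllSet a (range fun j => sInf (As j)) ∩ ⋃ n, M n = ∅ := by
  classical
  set x := fun j => sInf (As j)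
  have hx : StrictMono x := strictMono_sInf h_inf h_sub
  rw [eq_empty_iff_forall_notMem]
  rintro C ⟨⟨hC, -, hCa⟩, hCM⟩
  obtain ⟨n, hCn⟩ := mem_iUnion.mp hCM
  -- past `x j` the set `C` avoids `a`, so it continues inside `As (j + 1)`
  set j := n + a.sup id
  have ha_le (c : ℕ) (hc : c ∈ a) : c ≤ x j :=
    (Finset.le_sup (f := id) hc).trans ((Nat.le_add_left _ n).trans (hx.id_le j))
  set b := (Finset.range (x j + 1)).filter (· ∈ C)
  have hCb : C ∈ EllSet b (As (j + 1)) := by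
    refine ⟨hC, fun c hc => (Finset.mem_filter.mp hc).2, fun c hc => ?_⟩
    rcases le_or_gt c (x j) with hcj | hjc
    · exact Or.inl (Finset.mem_filter.mpr ⟨Finset.mem_range_succ_iff.mpr hcj, hc⟩)
    · obtain ⟨k, rfl⟩ := (hCa hc).resolve_left fun hca => (ha_le _ hca).not_gt hjc
      exact Or.inr (sInf_mem_of_le h_inf h_sub (hx.lt_iff_lt.mp hjc))
  have hb : b ⊆ Finset.range (x j + 1) := Finset.filter_subset _ _
  exact (h_kill j b hb n (Nat.le_add_right n _)).subset ⟨hCb, hCn⟩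

end Fusion

theorem RamseyNull.iUnion {M : ℕ → Set (Set ℕ)} (hM : ∀ n, RamseyNull (M n)) :
    RamseyNull (⋃ n, M n) := by
  intro a A hA
  obtain ⟨As, rfl, h_inf, h_sub, h_kill⟩ := exists_fusion_sequence hM hA
  refine ⟨range fun j => sInf (As j), ?_, ?_, ?_⟩
  · rintro _ ⟨j, rfl⟩
    exact sInf_mem_of_le h_inf h_sub (Nat.zero_le j)
  · exact infinite_range_of_injective (strictMono_sInf h_inf h_sub).injective
  · exact ellSet_range_sInf_inter_iUnion_eq_empty h_inf h_sub h_kill a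

/-- The Ramsey null sets form a σ-ideal on `[ω]^ω`. -/
theorem ramseyNull_sigma_ideal :
    RamseyNull (∅ : Set (Set ℕ)) ∧
    (∀ M N : Set (Set ℕ), M ⊆ N → RamseyNull N → RamseyNull M) ∧
    (∀ M : ℕ → Set (Set ℕ), (∀ n, RamseyNull (M n)) → RamseyNull (⋃ n, M n)) :=
  ⟨ramseyNull_empty, fun _ _ h hN => hN.mono h, fun _ => RamseyNull.iUnion⟩
end

section
/- Let M ⊆ [ω]^ω be open and dense in the Ellentuck topology. Then for every A ∈ [ω]^ω and every a ∈ [ω]^{<ω} there exists an infinite B ⊆ A such that [∅, B ∪ a] ⊆ M. -/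
open Set

/-- `M` is open in the Ellentuck topology (a set of infinite sets which is a union of
Ellentuck basic sets). -/
def EllOpen (M : Set (Set ℕ)) : Prop :=
  M ⊆ {A | A.Infinite} ∧
    ∀ B ∈ M, ∃ (a : Finset ℕ) (A : Set ℕ), A.Infinite ∧ B ∈ EllSet a A ∧ EllSet a A ⊆ M

/-- `M` is dense in the Ellentuck topology. -/
def EllDense (M : Set (Set ℕ)) : Prop :=
  ∀ (a : Finset ℕ) (A : Set ℕ), A.Infinite → (EllSet a A).Nonempty →
    (EllSet a A ∩ M).Nonempty

/-!
Call `B` an acceptor of the stem `t` if `[t, B] ⊆ M`, and a rejector of `t` if no infinite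
`D ⊆ B` accepts `t`. If `B` rejects `t`, then some `c ∈ B` and infinite `B' ⊆ B` reject
`insert c t`: otherwise a fusion sequence of acceptors of the stems `insert c t` yields a set
accepting `t`. Iterating this by a second fusion, if `A` rejects `s` there is an infinite
`C ⊆ A` rejecting every stem `s ∪ u` with `u ⊆ C` finite. This is impossible for `M` open and
dense: density gives `Y ∈ [s, C] ∩ M`, openness a basic set `[b, D] ∋ Y` inside `M`, and then
`Y \ (s ∪ b) ⊆ C` accepts `s ∪ b`. Hence every stem is accepted below every infinite set, and it
remains to shrink `A` once for each of the finitely many stems `s ⊆ a`.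
-/

namespace Ellentuck

theorem exists_fusion {R : Finset ℕ → Set ℕ → Prop} {B₀ : Set ℕ} (hB₀ : B₀.Infinite)
    (h₀ : R ∅ B₀)
    (step : ∀ F B, B.Infinite → R F B →
      ∃ c ∈ B, ∃ B' ⊆ B \ {c}, B'.Infinite ∧ R (insert c F) B') :
    ∃ x : ℕ → ℕ, Function.Injective x ∧ range x ⊆ B₀ ∧ ∃ B : ℕ → Set ℕ,
      ∀ k, R ((Finset.range k).image x) (B k) ∧ x '' Ici k ⊆ B k := by
  choose! c hc next hnext hnext_inf hnext_R using step
  let S : ℕ → Finset ℕ × Set ℕ := fun k =>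
    Nat.rec (∅, B₀) (fun _ p => (insert (c p.1 p.2) p.1, next p.1 p.2)) k
  have hS : ∀ k, (S k).2.Infinite ∧ R (S k).1 (S k).2 := by
    intro k
    induction k with
    | zero => exact ⟨hB₀, h₀⟩
    | succ k ih => exact ⟨hnext_inf _ _ ih.1 ih.2, hnext_R _ _ ih.1 ih.2⟩
  set x : ℕ → ℕ := fun k => c (S k).1 (S k).2
  have hxS : ∀ k, x k ∈ (S k).2 := fun k => hc _ _ (hS k).1 (hS k).2
  have hsucc : ∀ k, (S (k + 1)).2 ⊆ (S k).2 \ {x k} := fun k => hnext _ _ (hS k).1 (hS k).2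
  have hanti : Antitone fun k => (S k).2 :=
    antitone_nat_of_succ_le fun k => (hsucc k).trans sdiff_subset
  have hF : ∀ k, (S k).1 = (Finset.range k).image x := by
    intro k
    induction k with
    | zero => rfl
    | succ k ih => rw [Finset.range_add_one, Finset.image_insert, ← ih]
  have hne : ∀ j k, j < k → x k ≠ x j := fun j k hjk =>
    ((hsucc j) (hanti (Nat.succ_le_of_lt hjk) (hxS k))).2
  refine ⟨x, fun j k hjk => ?_, ?_, fun k => (S k).2, fun k => ⟨hF k ▸ (hS k).2, ?_⟩⟩
  · by_contra hjk'
    rcases Nat.lt_or_gt_of_ne hjk' with h | h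
    exacts [hne j k h hjk.symm, hne k j h hjk]
  · rintro _ ⟨k, rfl⟩
    exact hanti (Nat.zero_le k) (hxS k)
  · rintro _ ⟨j, hj, rfl⟩
    exact hanti hj (hxS j)

theorem range_subset_image_range_union {x : ℕ → ℕ} {B : Set ℕ} {k : ℕ}
    (h : x '' Ici k ⊆ B) : range x ⊆ ↑((Finset.range k).image x) ∪ B := by
  rintro _ ⟨j, rfl⟩
  rcases lt_or_ge j k with hj | hj
  · exact Or.inl (Finset.mem_image_of_mem x (Finset.mem_range.2 hj))
  · exact Or.inr (h ⟨j, hj, rfl⟩)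

theorem exists_subset_image_range {x : ℕ → ℕ} (hx : Function.Injective x) {u : Finset ℕ}
    (hu : ↑u ⊆ range x) : ∃ k, u ⊆ (Finset.range k).image x := by
  obtain ⟨k, hk⟩ := Finset.exists_nat_subset_range (u.preimage x hx.injOn)
  refine ⟨k, fun y hy => ?_⟩
  obtain ⟨i, rfl⟩ := hu hy
  exact Finset.mem_image_of_mem x (hk (Finset.mem_preimage.2 hy))

theorem exists_subset_forall_of_dense {ι : Type*} (I : Finset ι) {P : ι → Set ℕ → Prop}
    (hP : ∀ i B C, P i B → C ⊆ B → P i C) {A : Set ℕ}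
    (hdense : ∀ i ∈ I, ∀ B ⊆ A, B.Infinite → ∃ C ⊆ B, C.Infinite ∧ P i C)
    (hA : A.Infinite) :
    ∃ B ⊆ A, B.Infinite ∧ ∀ i ∈ I, P i B := by
  classical
  induction I using Finset.induction_on with
  | empty => exact ⟨A, subset_rfl, hA, by simp⟩
  | insert i I _ ih =>
    obtain ⟨B, hBA, hB, hPB⟩ := ih fun j hj => hdense j (Finset.mem_insert_of_mem hj)
    obtain ⟨C, hCB, hC, hPC⟩ := hdense i (Finset.mem_insert_self i I) B hBA hB
    refine ⟨C, hCB.trans hBA, hC, (Finset.forall_mem_insert _ _ _).2 ⟨hPC, ?_⟩⟩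
    exact fun j hj => hP j B C (hPB j hj) hCB

theorem ellSet_empty_union_subset (a : Finset ℕ) (B : Set ℕ) :
    EllSet ∅ (B ∪ ↑a) ⊆ ⋃ s ∈ a.powerset, EllSet s B := by
  classical
  rintro X ⟨hX, -, hXB⟩
  refine mem_biUnion (x := a.filter (· ∈ X)) (Finset.mem_powerset.2 (Finset.filter_subset _ _))
    ⟨hX, fun y hy => (Finset.mem_filter.1 hy).2, fun y hy => ?_⟩
  rcases (hXB hy).resolve_left (Finset.notMem_empty y) with hyB | hya
  · exact Or.inr hyB
  · exact Or.inl (Finset.mem_filter.2 ⟨hya, hy⟩)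

variable {M : Set (Set ℕ)} {t : Finset ℕ} {B C : Set ℕ}

variable (M) in
def Accepts (t : Finset ℕ) (B : Set ℕ) : Prop := EllSet t B ⊆ M

variable (M) in
def Rejects (t : Finset ℕ) (B : Set ℕ) : Prop := ¬ ∃ D ⊆ B, D.Infinite ∧ Accepts M t D

theorem Accepts.mono (h : Accepts M t B) (hCB : C ⊆ B) : Accepts M t C :=
  fun _ hX => h ⟨hX.1, hX.2.1, hX.2.2.trans (union_subset_union_right _ hCB)⟩

theorem Rejects.mono (h : Rejects M t B) (hCB : C ⊆ B) : Rejects M t C :=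
  fun ⟨D, hDC, hD, hacc⟩ => h ⟨D, hDC.trans hCB, hD, hacc⟩

theorem Rejects.of_subset_union (h : Rejects M t B) {F : Set ℕ} (hF : F.Finite)
    (hC : C ⊆ F ∪ B) : Rejects M t C :=
  fun ⟨D, hDC, hD, hacc⟩ =>
    h ⟨D \ F, fun _ hy => (hC (hDC hy.1)).resolve_left hy.2, hD.sdiff hF,
      hacc.mono sdiff_subset⟩

theorem Rejects.exists_insert (h : Rejects M t B) (hB : B.Infinite) :
    ∃ c ∈ B, ∃ B' ⊆ B \ {c}, B'.Infinite ∧ Rejects M (insert c t) B' := by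
  classical
  by_contra! hacc
  obtain ⟨x, hx, hxB, D, hD⟩ := exists_fusion
    (R := fun F D => D ⊆ B ∧ ∀ c ∈ F, Accepts M (insert c t) D) hB
    ⟨subset_rfl, by simp⟩ (by
      rintro F D hD ⟨hDB, hF⟩
      obtain ⟨c, hc⟩ := hD.nonempty
      obtain ⟨D', hD'sub, hD', hD'acc⟩ := not_not.1 <|
        hacc c (hDB hc) (D \ {c}) (sdiff_subset_sdiff_left hDB) (hD.sdiff (finite_singleton c))
      have hD'D : D' ⊆ D := hD'sub.trans sdiff_subset
      refine ⟨c, hc, D', hD'sub, hD', hD'D.trans hDB, ?_⟩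
      exact (Finset.forall_mem_insert _ _ _).2 ⟨hD'acc, fun c' hc' => (hF c' hc').mono hD'D⟩)
  refine h ⟨range x, hxB, infinite_range_of_injective hx, ?_⟩
  rintro X ⟨hX, htX, hXt⟩
  have hex : ∃ i, x i ∈ X ∧ x i ∉ t := by
    obtain ⟨y, hyX, hyt⟩ := (hX.sdiff t.finite_toSet).nonempty
    obtain ⟨i, rfl⟩ := (hXt hyX).resolve_left hyt
    exact ⟨i, hyX, hyt⟩
  -- `X` lies in `[insert (x i) t, D (i + 1)]` for the first index `i` with `x i ∈ X \ t`.
  set i := Nat.find hex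
  refine (hD (i + 1)).1.2 (x i) (Finset.mem_image_of_mem x (Finset.self_mem_range_succ i))
    ⟨hX, ?_, fun y hy => ?_⟩
  · rw [Finset.coe_insert]
    exact insert_subset (Nat.find_spec hex).1 htX
  · rcases hXt hy with hyt | ⟨j, rfl⟩
    · exact Or.inl (Finset.mem_insert_of_mem hyt)
    rcases lt_trichotomy j i with hji | rfl | hij
    · have := Nat.find_min hex hji
      exact Or.inl (Finset.mem_insert_of_mem (not_and_not_right.1 this hy))
    · exact Or.inl (Finset.mem_insert_self _ _)
    · exact Or.inr ((hD (i + 1)).2 ⟨j, hij, rfl⟩)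

theorem Rejects.exists_subset_forall_insert (h : Rejects M t B) (hB : B.Infinite) :
    ∃ C ⊆ B, C.Infinite ∧ ∀ c ∈ C, Rejects M (insert c t) C := by
  classical
  obtain ⟨x, hx, hxB, D, hD⟩ := exists_fusion
    (R := fun F D => Rejects M t D ∧ ∀ c ∈ F, Rejects M (insert c t) D) hB
    ⟨h, by simp⟩ (by
      rintro F D hD ⟨hrej, hF⟩
      obtain ⟨c, hc, D', hD'sub, hD', hrej'⟩ := hrej.exists_insert hD
      have hD'D : D' ⊆ D := hD'sub.trans sdiff_subset
      refine ⟨c, hc, D', hD'sub, hD', hrej.mono hD'D, ?_⟩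
      exact (Finset.forall_mem_insert _ _ _).2 ⟨hrej', fun c' hc' => (hF c' hc').mono hD'D⟩)
  refine ⟨range x, hxB, infinite_range_of_injective hx, ?_⟩
  rintro _ ⟨j, rfl⟩
  have hrej := (hD (j + 1)).1.2 (x j) (Finset.mem_image_of_mem x (Finset.self_mem_range_succ j))
  exact hrej.of_subset_union (Finset.finite_toSet _) (range_subset_image_range_union (hD (j + 1)).2)

theorem Rejects.exists_subset_forall_union {s : Finset ℕ} {A : Set ℕ} (h : Rejects M s A)
    (hA : A.Infinite) :
    ∃ C ⊆ A, C.Infinite ∧ ∀ u : Finset ℕ, ↑u ⊆ C → Rejects M (s ∪ u) C := by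
  classical
  obtain ⟨x, hx, hxA, B, hB⟩ := exists_fusion
    (R := fun F B => ∀ u ⊆ F, Rejects M (s ∪ u) B) hA
    (fun u hu => by rwa [Finset.subset_empty.1 hu, Finset.union_empty]) (by
      intro F B hB hR
      obtain ⟨C, hCB, hC, hCrej⟩ := exists_subset_forall_of_dense F.powerset
        (P := fun u C => ∀ c ∈ C, Rejects M (insert c (s ∪ u)) C)
        (fun _ _ _ hP hC'C c hc => (hP c (hC'C hc)).mono hC'C)
        (fun u hu _ hC'B hC' =>
          ((hR u (Finset.mem_powerset.1 hu)).mono hC'B).exists_subset_forall_insert hC') hB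
      obtain ⟨c, hc⟩ := hC.nonempty
      refine ⟨c, hCB hc, C \ {c}, sdiff_subset_sdiff_left hCB, hC.sdiff (finite_singleton c),
        fun u hu => ?_⟩
      by_cases hcu : c ∈ u
      · rw [← Finset.insert_erase hcu, Finset.union_insert]
        exact (hCrej _ (Finset.mem_powerset.2 (Finset.subset_insert_iff.1 hu)) c hc).mono
          sdiff_subset
      · exact (hR u ((Finset.subset_insert_iff_of_notMem hcu).1 hu)).mono
          (sdiff_subset.trans hCB))
  refine ⟨range x, hxA, infinite_range_of_injective hx, fun u hu => ?_⟩
  obtain ⟨k, hk⟩ := exists_subset_image_range hx hu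
  exact ((hB k).1 u hk).of_subset_union (Finset.finite_toSet _)
    (range_subset_image_range_union (hB k).2)

theorem exists_accepts_union (hopen : EllOpen M) (hdense : EllDense M) (s : Finset ℕ)
    (hC : C.Infinite) :
    ∃ u : Finset ℕ, ↑u ⊆ C ∧ ∃ D ⊆ C, D.Infinite ∧ Accepts M (s ∪ u) D := by
  classical
  obtain ⟨Y, ⟨hY, hsY, hYC⟩, hYM⟩ :=
    hdense s C hC ⟨↑s ∪ C, hC.mono subset_union_right, subset_union_left, subset_rfl⟩
  obtain ⟨b, D, -, ⟨-, hbY, hYD⟩, hbDM⟩ := hopen.2 Y hYM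
  have hsbY : ↑(s ∪ b) ⊆ Y := by
    rw [Finset.coe_union]
    exact union_subset hsY hbY
  refine ⟨b \ s, fun y hy => ?_, Y \ ↑(s ∪ b), fun y hy => ?_,
    hY.sdiff (Finset.finite_toSet _), ?_⟩
  · rw [Finset.coe_sdiff] at hy
    exact (hYC (hbY hy.1)).resolve_left hy.2
  · rw [Finset.coe_union] at hy
    exact (hYC hy.1).resolve_left fun hys => hy.2 (Or.inl hys)
  · rw [Finset.union_sdiff_self_eq_union]
    rintro Z ⟨hZ, hsbZ, hZY⟩
    have hbZ : (b : Set ℕ) ⊆ Z := (Finset.coe_subset.2 Finset.subset_union_right).trans hsbZ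
    exact hbDM ⟨hZ, hbZ, (hZY.trans (union_subset hsbY sdiff_subset)).trans hYD⟩

theorem exists_accepts (hopen : EllOpen M) (hdense : EllDense M) (s : Finset ℕ) {A : Set ℕ}
    (hA : A.Infinite) : ∃ B ⊆ A, B.Infinite ∧ Accepts M s B := by
  by_contra h
  obtain ⟨C, -, hC, hCrej⟩ := Rejects.exists_subset_forall_union h hA
  obtain ⟨u, hu, D, hDC, hD, hacc⟩ := exists_accepts_union hopen hdense s hC
  exact hCrej u hu ⟨D, hDC, hD, hacc⟩

end Ellentuck

open Ellentuck in
/-- For an Ellentuck open dense `M`, every `A` and `a` admit an infinite `B ⊆ A` with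
`[∅, B ∪ a] ⊆ M`. -/
theorem ellentuck_open_dense_fact (M : Set (Set ℕ))
    (hopen : EllOpen M) (hdense : EllDense M)
    (A : Set ℕ) (hA : A.Infinite) (a : Finset ℕ) :
    ∃ B ⊆ A, B.Infinite ∧ EllSet ∅ (B ∪ ↑a) ⊆ M := by
  obtain ⟨B, hBA, hB, hacc⟩ := exists_subset_forall_of_dense a.powerset (P := Accepts M)
    (fun _ _ _ h hCB => h.mono hCB) (fun s _ C _ hC => exists_accepts hopen hdense s hC) hA
  refine ⟨B, hBA, hB, (ellSet_empty_union_subset a B).trans ?_⟩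
  exact iUnion₂_subset hacc
end
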